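/- Let l divide n, 1 ≤ p,q ≤ n/l, and 1 ≤ k ≤ l. Then in U(g_0): ϑ(π(e_{lp, l(q−1)+1}^{(l+k−1)})) equals the even component, and ϑ(π(f_{lp, l(q−1)+1}^{(l+k−1)})) equals the odd component, of the sum over all 1 ≤ p_1,…,p_{k−1} ≤ n/l and all l ≥ i_1 ≥ i_2 ≥ … ≥ i_k ≥ 1 of the ordered products Π_{a=1}^{k} (x^{i_a}_{p_{a−1}, p_a} + (−1)^{k−a} ξ^{i_a}_{p_{a−1}, p_a}), where p_0 := p and p_k := q. -/

import Mathlib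

noncomputable section
open scoped Classical

/-! # The universal enveloping superalgebra `U(Q(n))` of the queer Lie superalgebra

`U(Q(n))` is presented by even generators `e i j` and odd generators `f i j`
(`1 ≤ i,j ≤ n`) subject to the relations
`[e i j, e k l] = δ_{jk} e i l - δ_{li} e k j`,
`[e i j, f k l] = δ_{jk} f i l - δ_{li} f k j`,
`f i j * f k l + f k l * f i j = δ_{jk} e i l + δ_{li} e k j`. -/

/-- Generators of `U(Q(n))`: `E i j` (even) and `F i j` (odd). -/
inductive QGen (n : ℕ) : Type
  | E : Fin n → Fin n → QGen n
  | F : Fin n → Fin n → QGen n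

/-- Kronecker delta. -/
def kd {n : ℕ} (i j : Fin n) : ℂ := if i = j then 1 else 0

/-- The defining relations of `U(Q(n))`. -/
inductive QRel (n : ℕ) : FreeAlgebra ℂ (QGen n) → FreeAlgebra ℂ (QGen n) → Prop
  | ee (i j k l : Fin n) : QRel n
      (FreeAlgebra.ι ℂ (QGen.E i j) * FreeAlgebra.ι ℂ (QGen.E k l) -
        FreeAlgebra.ι ℂ (QGen.E k l) * FreeAlgebra.ι ℂ (QGen.E i j))
      (kd j k • FreeAlgebra.ι ℂ (QGen.E i l) - kd l i • FreeAlgebra.ι ℂ (QGen.E k j))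
  | ef (i j k l : Fin n) : QRel n
      (FreeAlgebra.ι ℂ (QGen.E i j) * FreeAlgebra.ι ℂ (QGen.F k l) -
        FreeAlgebra.ι ℂ (QGen.F k l) * FreeAlgebra.ι ℂ (QGen.E i j))
      (kd j k • FreeAlgebra.ι ℂ (QGen.F i l) - kd l i • FreeAlgebra.ι ℂ (QGen.F k j))
  | ff (i j k l : Fin n) : QRel n
      (FreeAlgebra.ι ℂ (QGen.F i j) * FreeAlgebra.ι ℂ (QGen.F k l) +
        FreeAlgebra.ι ℂ (QGen.F k l) * FreeAlgebra.ι ℂ (QGen.F i j))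
      (kd j k • FreeAlgebra.ι ℂ (QGen.E i l) + kd l i • FreeAlgebra.ι ℂ (QGen.E k j))

/-- The universal enveloping superalgebra `U(Q(n))`. -/
abbrev UQ (n : ℕ) := RingQuot (QRel n)

/-- The generator `e i j` of `U(Q(n))`. -/
def Ue {n : ℕ} (i j : Fin n) : UQ n :=
  RingQuot.mkAlgHom ℂ (QRel n) (FreeAlgebra.ι ℂ (QGen.E i j))

/-- The generator `f i j` of `U(Q(n))`. -/
def Uf {n : ℕ} (i j : Fin n) : UQ n :=
  RingQuot.mkAlgHom ℂ (QRel n) (FreeAlgebra.ι ℂ (QGen.F i j))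

/-- Sergeev's elements `e_{ij}^{(m)}` and `f_{ij}^{(m)}` of `U(Q(n))`, defined recursively by
`e^{(0)} = δ`, `f^{(0)} = 0`,
`e_{ij}^{(m)} = Σ_k e_{ik} e_{kj}^{(m-1)} + (-1)^{m+1} Σ_k f_{ik} f_{kj}^{(m-1)}`,
`f_{ij}^{(m)} = Σ_k e_{ik} f_{kj}^{(m-1)} + (-1)^{m+1} Σ_k f_{ik} e_{kj}^{(m-1)}`. -/
def efU (n : ℕ) : ℕ → (Fin n → Fin n → UQ n) × (Fin n → Fin n → UQ n)
  | 0 => (fun i j => algebraMap ℂ (UQ n) (kd i j), fun _ _ => 0)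
  | m + 1 =>
      (fun i j => (∑ k, Ue i k * (efU n m).1 k j) +
        (-1 : ℂ) ^ m • ∑ k, Uf i k * (efU n m).2 k j,
       fun i j => (∑ k, Ue i k * (efU n m).2 k j) +
        (-1 : ℂ) ^ m • ∑ k, Uf i k * (efU n m).1 k j)

/-- `e_{ij}^{(m)}`. -/
def eU {n : ℕ} (m : ℕ) (i j : Fin n) : UQ n := (efU n m).1 i j
/-- `f_{ij}^{(m)}`. -/
def fU {n : ℕ} (m : ℕ) (i j : Fin n) : UQ n := (efU n m).2 i j

/-- For `l ∣ n`, the index `l(p-1)+i` of `{1,…,n}` (0-based: block `p`, position `i`). -/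
def bidx {n l : ℕ} (h : l ∣ n) (p : Fin (n / l)) (i : Fin l) : Fin n :=
  ⟨l * p.val + i.val, by
    have h1 : i.val < l := i.isLt
    have h2 : p.val + 1 ≤ n / l := p.isLt
    have h3 : l * (p.val + 1) ≤ l * (n / l) := Nat.mul_le_mul_left l h2
    have h4 : n / l * l ≤ n := Nat.div_mul_le_self n l
    have h5 : l * (p.val + 1) = l * p.val + l := Nat.mul_succ l p.val
    have h6 : l * (n / l) = n / l * l := Nat.mul_comm l (n / l)
    omega⟩
set_option linter.unusedVariables false

/-! # The character `χ`, the left ideal `I_χ` and the finite W-algebra data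

Here `l ∣ n` and `χ` corresponds to the even nilpotent element of `Q(n)` all of whose
Jordan blocks have size `l`.  The subalgebra `m = ⊕_{j<0} g_j` is spanned by the
elements `e_{l(p-1)+i+k, l(q-1)+i}` and `f_{l(p-1)+i+k, l(q-1)+i}` (`k ≥ 1`), and
`χ(e_{l(p-1)+i+1, l(q-1)+i}) = δ_{pq}` and `χ = 0` on the other basis elements. -/

/-- The set of elements `a - χ(a)` for `a` ranging over the standard basis of `m`;
(rows/columns written 0-based: `a` is the position of the row inside its block `p`,
`b` the position of the column inside its block `q`, with `b < a`). -/
def mSet (n l : ℕ) (h : l ∣ n) : Set (UQ n) :=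
  { x : UQ n | ∃ (p q : Fin (n / l)) (a b : Fin l), b.val < a.val ∧
      (x = Ue (bidx h p a) (bidx h q b) -
            algebraMap ℂ (UQ n) (if a.val = b.val + 1 ∧ p = q then 1 else 0) ∨
       x = Uf (bidx h p a) (bidx h q b)) }

/-- The left ideal `I_χ` of `U(Q(n))` generated by the `a - χ(a)`, `a ∈ m`. -/
def Ichi (n l : ℕ) (h : l ∣ n) : Submodule (UQ n) (UQ n) :=
  Submodule.span (UQ n) (mSet n l h)

/-- The quotient `U(Q(n))/I_χ` (as a `ℂ`-vector space). -/
abbrev Wq (n l : ℕ) (h : l ∣ n) := UQ n ⧸ (Ichi n l h).restrictScalars ℂ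

/-- The quotient map `π : U(Q(n)) → U(Q(n))/I_χ`. -/
def piq (n l : ℕ) (h : l ∣ n) : UQ n →ₗ[ℂ] Wq n l h :=
  ((Ichi n l h).restrictScalars ℂ).mkQ

/-- `y` super-commutes with `m` into `I_χ`:  `[a, y] ∈ I_χ` for every `a` in the standard
basis of `m`.  Here the super-commutator of the odd element `f` with (the possibly
non-homogeneous) `y` is `f * y - σ(y) * f`, where `σ` is the parity involution of
`U(Q(n))` (the algebra automorphism fixing the `e`'s and negating the `f`'s). -/
def Wcond {n l : ℕ} (h : l ∣ n) (σ : UQ n →ₐ[ℂ] UQ n) (y : UQ n) : Prop :=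
  ∀ (p q : Fin (n / l)) (a b : Fin l), b.val < a.val →
    (Ue (bidx h p a) (bidx h q b) * y - y * Ue (bidx h p a) (bidx h q b) ∈ Ichi n l h) ∧
    (Uf (bidx h p a) (bidx h q b) * y - σ y * Uf (bidx h p a) (bidx h q b) ∈ Ichi n l h)

/-- The finite W-algebra `W_χ = {π(y) | [a, y] ∈ I_χ for all a ∈ m}`, as a subset of
`U(Q(n))/I_χ`.  (Its product is `π(y₁)·π(y₂) = π(y₁y₂)`.) -/
def WchiSet (n l : ℕ) (h : l ∣ n) (σ : UQ n →ₐ[ℂ] UQ n) : Set (Wq n l h) :=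
  { w : Wq n l h | ∃ y : UQ n, Wcond h σ y ∧ piq n l h y = w }

/-- The standard basis elements of the parabolic subalgebra `p = ⊕_{j≥0} g_j`. -/
def pSet (n l : ℕ) (h : l ∣ n) : Set (UQ n) :=
  { x : UQ n | ∃ (p q : Fin (n / l)) (a b : Fin l), a.val ≤ b.val ∧
      (x = Ue (bidx h p a) (bidx h q b) ∨ x = Uf (bidx h p a) (bidx h q b)) }

/-- The standard basis elements of the nilradical `n = ⊕_{j>0} g_j` of `p`. -/
def nSet (n l : ℕ) (h : l ∣ n) : Set (UQ n) :=
  { x : UQ n | ∃ (p q : Fin (n / l)) (a b : Fin l), a.val < b.val ∧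
      (x = Ue (bidx h p a) (bidx h q b) ∨ x = Uf (bidx h p a) (bidx h q b)) }

/-- The kernel of the Harish-Chandra projection `ϑ : U(p) → U(g₀)`, realized inside
`U(Q(n))`: the `ℂ`-span of `U(p)·n`.  (By the PBW theorem, `U(g) = U(p) ⊕ I_χ` and
`U(p) = U(g₀) ⊕ U(p)n`, so for `y ∈ U(g)`, `ϑ(pr(y)) = t` iff
`y - t ∈ I_χ + U(p)n`.) -/
def Lspan (n l : ℕ) (h : l ∣ n) : Submodule ℂ (UQ n) :=
  Submodule.span ℂ
    { x : UQ n | ∃ u ∈ Algebra.adjoin ℂ (pSet n l h), ∃ g ∈ nSet n l h, x = u * g }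

/-- A descriptor of a generator of `U(p)`:  `(b, p, q, a, c)` is
`e_{l(p-1)+(a+1), l(q-1)+(c+1)}` if `b = false` and `f_{…}` if `b = true`
(required: `a ≤ c`). -/
def pgElem {n l : ℕ} (h : l ∣ n) :
    Bool × Fin (n / l) × Fin (n / l) × Fin l × Fin l → UQ n
  | (b, p, q, a, c) => (if b then Uf else Ue) (bidx h p a) (bidx h q c)

/-- Kazhdan degree `2k+2` of a `p`-generator of block offset `k = c - a`. -/
def pgDeg {l m : ℕ} (d : Bool × Fin m × Fin m × Fin l × Fin l) : ℕ :=
  2 * (d.2.2.2.2.val - d.2.2.2.1.val) + 2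

/-- Weight `2k` of a `p`-generator of block offset `k = c - a`. -/
def pgWt {l m : ℕ} (d : Bool × Fin m × Fin m × Fin l × Fin l) : ℕ :=
  2 * (d.2.2.2.2.val - d.2.2.2.1.val)

/-- Monomials in the generators of `U(p)` which are "lower" than bidegree
(Kazhdan degree `D`, weight `W`): either of Kazhdan degree `< D`, or of Kazhdan
degree `≤ D` and weight `< W`. -/
def LowSet (n l : ℕ) (h : l ∣ n) (D W : ℕ) : Set (UQ n) :=
  { x : UQ n | ∃ L : List (Bool × Fin (n / l) × Fin (n / l) × Fin l × Fin l),
      (∀ d ∈ L, d.2.2.2.1.val ≤ d.2.2.2.2.val) ∧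
      x = (L.map (pgElem h)).prod ∧
      ((L.map pgDeg).sum < D ∨ ((L.map pgDeg).sum ≤ D ∧ (L.map pgWt).sum < W)) }

/-- The span of the "lower" monomials. -/
def LowSpan (n l : ℕ) (h : l ∣ n) (D W : ℕ) : Submodule ℂ (UQ n) :=
  Submodule.span ℂ (LowSet n l h D W)

/-! # The super tensor power `U(Q(m))^{⊗l}`

Modeled as the superalgebra with generators `x^i_{pq} = 1^{⊗(l-i)} ⊗ e_{pq} ⊗ 1^{⊗(i-1)}`
(even) and `ξ^i_{pq} = 1^{⊗(l-i)} ⊗ f_{pq} ⊗ 1^{⊗(i-1)}` (odd), subject to the `U(Q(m))`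
relations in each tensor slot and to (super-)commutation between different slots. -/

/-- Generators of `U(Q(m))^{⊗l}`: `X i p q` is `x^i_{pq}` and `Xi i p q` is `ξ^i_{pq}`
(`i : Fin l` is the 0-based tensor slot, counted from the right). -/
inductive TGen (m l : ℕ) : Type
  | X : Fin l → Fin m → Fin m → TGen m l
  | Xi : Fin l → Fin m → Fin m → TGen m l

/-- Kronecker delta on slots. -/
def kdl {l : ℕ} (i j : Fin l) : ℂ := if i = j then 1 else 0

/-- The defining relations of `U(Q(m))^{⊗l}`. -/
inductive TRel (m l : ℕ) : FreeAlgebra ℂ (TGen m l) → FreeAlgebra ℂ (TGen m l) → Prop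
  | xx (i i' : Fin l) (p q r s : Fin m) : TRel m l
      (FreeAlgebra.ι ℂ (TGen.X i p q) * FreeAlgebra.ι ℂ (TGen.X i' r s) -
        FreeAlgebra.ι ℂ (TGen.X i' r s) * FreeAlgebra.ι ℂ (TGen.X i p q))
      ((kdl i i' * kd q r) • FreeAlgebra.ι ℂ (TGen.X i p s) -
        (kdl i i' * kd s p) • FreeAlgebra.ι ℂ (TGen.X i' r q))
  | xxi (i i' : Fin l) (p q r s : Fin m) : TRel m l
      (FreeAlgebra.ι ℂ (TGen.X i p q) * FreeAlgebra.ι ℂ (TGen.Xi i' r s) -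
        FreeAlgebra.ι ℂ (TGen.Xi i' r s) * FreeAlgebra.ι ℂ (TGen.X i p q))
      ((kdl i i' * kd q r) • FreeAlgebra.ι ℂ (TGen.Xi i p s) -
        (kdl i i' * kd s p) • FreeAlgebra.ι ℂ (TGen.Xi i' r q))
  | xixi (i i' : Fin l) (p q r s : Fin m) : TRel m l
      (FreeAlgebra.ι ℂ (TGen.Xi i p q) * FreeAlgebra.ι ℂ (TGen.Xi i' r s) +
        FreeAlgebra.ι ℂ (TGen.Xi i' r s) * FreeAlgebra.ι ℂ (TGen.Xi i p q))
      ((kdl i i' * kd q r) • FreeAlgebra.ι ℂ (TGen.X i p s) +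
        (kdl i i' * kd s p) • FreeAlgebra.ι ℂ (TGen.X i' r q))

/-- The superalgebra `U(Q(m))^{⊗l}`. -/
abbrev TQ (m l : ℕ) := RingQuot (TRel m l)

/-- `x^i_{pq} := 1^{⊗(l-i)} ⊗ e_{pq} ⊗ 1^{⊗(i-1)} ∈ U(Q(m))^{⊗l}`. -/
def xT {m l : ℕ} (i : Fin l) (p q : Fin m) : TQ m l :=
  RingQuot.mkAlgHom ℂ (TRel m l) (FreeAlgebra.ι ℂ (TGen.X i p q))

/-- `ξ^i_{pq} := 1^{⊗(l-i)} ⊗ f_{pq} ⊗ 1^{⊗(i-1)} ∈ U(Q(m))^{⊗l}`. -/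
def xiT {m l : ℕ} (i : Fin l) (p q : Fin m) : TQ m l :=
  RingQuot.mkAlgHom ℂ (TRel m l) (FreeAlgebra.ι ℂ (TGen.Xi i p q))

/-! # The super-Yangian `Y(Q(n))` -/

/-- The index set `{±1, …, ±n}`:  `(false, a)` is the positive index `a` (even),
`(true, a)` is the negative index `-a` (odd). -/
abbrev QIdx (n : ℕ) := Bool × Fin n

/-- Negation `i ↦ -i` on indices. -/
def qneg {n : ℕ} (i : QIdx n) : QIdx n := (!i.1, i.2)

/-- The parity `p(i)`: `0` for positive `i`, `1` for negative `i`. -/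
def qpar {n : ℕ} (i : QIdx n) : ℕ := if i.1 then 1 else 0

/-- Kronecker delta on `{±1, …, ±n}`. -/
def kdq {n : ℕ} (i j : QIdx n) : ℂ := if i = j then 1 else 0

/-- Generators of `Y(Q(n))`: `T m i j` encodes `T^{(m+1)}_{i,j}`. -/
inductive YGen (n : ℕ) : Type
  | T : ℕ → QIdx n → QIdx n → YGen n

/-- `T^{(m)}_{i,j}` in the free algebra, with `T^{(0)}_{i,j} = δ_{ij}`. -/
def Tf {n : ℕ} : ℕ → QIdx n → QIdx n → FreeAlgebra ℂ (YGen n)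
  | 0, i, j => algebraMap ℂ _ (kdq i j)
  | m + 1, i, j => FreeAlgebra.ι ℂ (YGen.T m i j)

/-- The super-commutator `[T^{(a)}_{i,j}, T^{(b)}_{k,l}]` in the free algebra. -/
def ybr {n : ℕ} (a : ℕ) (i j : QIdx n) (b : ℕ) (k l : QIdx n) :
    FreeAlgebra ℂ (YGen n) :=
  Tf a i j * Tf b k l -
    ((-1 : ℂ) ^ ((qpar i + qpar j) * (qpar k + qpar l))) • (Tf b k l * Tf a i j)

/-- The defining relations of the super-Yangian `Y(Q(n))`: for `M, R ≥ 1`,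
`(-1)^{p(i)p(k)+p(i)p(l)+p(k)p(l)} ([T^{(M+1)}_{ij}, T^{(R-1)}_{kl}] - [T^{(M-1)}_{ij}, T^{(R+1)}_{kl}])
 = T^{(M)}_{kj}T^{(R-1)}_{il} + T^{(M-1)}_{kj}T^{(R)}_{il} - T^{(R-1)}_{kj}T^{(M)}_{il}
   - T^{(R)}_{kj}T^{(M-1)}_{il}
   + (-1)^{p(k)+p(l)} (-T^{(M)}_{-k,j}T^{(R-1)}_{-i,l} + T^{(M-1)}_{-k,j}T^{(R)}_{-i,l}
       + T^{(R-1)}_{k,-j}T^{(M)}_{i,-l} - T^{(R)}_{k,-j}T^{(M-1)}_{i,-l})`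
(here `M = m+1`, `R = r+1`), together with `T^{(m)}_{-i,-j} = (-1)^m T^{(m)}_{i,j}`. -/
inductive YRel (n : ℕ) : FreeAlgebra ℂ (YGen n) → FreeAlgebra ℂ (YGen n) → Prop
  | quad (m r : ℕ) (i j k l : QIdx n) : YRel n
      (((-1 : ℂ) ^ (qpar i * qpar k + qpar i * qpar l + qpar k * qpar l)) •
        (ybr (m + 2) i j r k l - ybr m i j (r + 2) k l))
      (Tf (m + 1) k j * Tf r i l + Tf m k j * Tf (r + 1) i l -
        Tf r k j * Tf (m + 1) i l - Tf (r + 1) k j * Tf m i l +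
        ((-1 : ℂ) ^ (qpar k + qpar l)) •
          (-(Tf (m + 1) (qneg k) j * Tf r (qneg i) l) +
            Tf m (qneg k) j * Tf (r + 1) (qneg i) l +
            Tf r k (qneg j) * Tf (m + 1) i (qneg l) -
            Tf (r + 1) k (qneg j) * Tf m i (qneg l)))
  | par (m : ℕ) (i j : QIdx n) : YRel n
      (Tf (m + 1) (qneg i) (qneg j)) (((-1 : ℂ) ^ (m + 1)) • Tf (m + 1) i j)

/-- The super-Yangian `Y(Q(n))`. -/
abbrev YQ (n : ℕ) := RingQuot (YRel n)

/-- The generator `T^{(m)}_{i,j}` of `Y(Q(n))` (with `T^{(0)}_{i,j} = δ_{ij}`). -/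
def TY {n : ℕ} (m : ℕ) (i j : QIdx n) : YQ n :=
  RingQuot.mkAlgHom ℂ (YRel n) (Tf m i j)

/-! # Values of the homomorphisms `U`, `ev`, `ēv` on the generators of `Y(Q(n))`,
and the explicit sums appearing in the main theorems. -/

/-- The value of the homomorphism `U : Y(Q(n)) → U(Q(n))` on the generator
`T^{(r)}_{i,j}`:  `U(T^{(r)}_{i,j}) = (-1)^r e^{(r)}_{j,i}`,
`U(T^{(r)}_{-i,j}) = (-1)^r f^{(r)}_{j,i}` for `i, j > 0`, and the values on the other
generators are forced by `T^{(r)}_{-i,-j} = (-1)^r T^{(r)}_{i,j}`. -/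
def Uval {n : ℕ} (r : ℕ) (i j : QIdx n) : UQ n :=
  (if j.1 then (-1 : ℂ) ^ r else 1) •
    ((-1 : ℂ) ^ r • (if xor i.1 j.1 then fU r j.2 i.2 else eU r j.2 i.2))

/-- The value of the evaluation homomorphism `ev : Y(Q(n)) → U(Q(n))` on `T^{(r)}_{i,j}`:
`ev(T^{(1)}_{i,j}) = -e_{j,i}`, `ev(T^{(1)}_{-i,j}) = -f_{j,i}` for `i, j > 0`,
`ev(T^{(0)}_{i,j}) = δ_{ij}` and `ev(T^{(r)}_{i,j}) = 0` for `r > 1` (with the values on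
the remaining generators forced by `T^{(r)}_{-i,-j} = (-1)^r T^{(r)}_{i,j}`). -/
def evval {n : ℕ} (r : ℕ) (i j : QIdx n) : UQ n :=
  (if j.1 then (-1 : ℂ) ^ r else 1) •
    (match r with
      | 0 => if xor i.1 j.1 then 0 else algebraMap ℂ (UQ n) (kd i.2 j.2)
      | 1 => -(if xor i.1 j.1 then Uf j.2 i.2 else Ue j.2 i.2)
      | _ + 2 => 0)

/-- The value of `ēv = α ∘ ev : Y(Q(n)) → U(Q(n))` on `T^{(r)}_{i,j}`, where `α` is the
principal anti-automorphism of `U(Q(n))`:  `ēv(T^{(1)}_{i,j}) = e_{j,i}`,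
`ēv(T^{(1)}_{-i,j}) = f_{j,i}` for `i, j > 0`, `ēv(T^{(0)}_{i,j}) = δ_{ij}`,
`ēv(T^{(r)}_{i,j}) = 0` for `r > 1`. -/
def bevval {n : ℕ} (r : ℕ) (i j : QIdx n) : UQ n :=
  (if j.1 then (-1 : ℂ) ^ r else 1) •
    (match r with
      | 0 => if xor i.1 j.1 then 0 else algebraMap ℂ (UQ n) (kd i.2 j.2)
      | 1 => (if xor i.1 j.1 then Uf j.2 i.2 else Ue j.2 i.2)
      | _ + 2 => 0)

/-- The sum `Σ_{p_1,…,p_{r-1}} Σ_{l ≥ i_1 ≥ i_2 ≥ … ≥ i_r ≥ 1}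
Π_{a=1}^r (x^{i_a}_{p_{a-1},p_a} + (-1)^{r-a} ξ^{i_a}_{p_{a-1},p_a})`
(with `p_0 = p`, `p_r = q`), an element of `U(Q(m))^{⊗l}`. -/
def chainProdDec (m l : ℕ) (r : ℕ) (p q : Fin m) : TQ m l :=
  ∑ c : Fin (r + 1) → Fin m, ∑ iv : Fin r → Fin l,
    (if c 0 = p ∧ c (Fin.last r) = q ∧ (∀ a b : Fin r, a ≤ b → iv b ≤ iv a)
      then (1 : ℂ) else 0) •
      (List.ofFn fun a : Fin r =>
        xT (iv a) (c a.castSucc) (c a.succ) +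
          ((-1 : ℂ) ^ (r - 1 - a.val)) • xiT (iv a) (c a.castSucc) (c a.succ)).prod

/-- The sum `Σ_{p_1,…,p_{r-1}} Σ_{1 ≤ i_1 < i_2 < … < i_r ≤ l}
Π_{a=1}^r (x^{i_a}_{p_{a-1},p_a} + (-1)^{r-a} ξ^{i_a}_{p_{a-1},p_a})`
(with `p_0 = p`, `p_r = q`), an element of `U(Q(m))^{⊗l}`. -/
def chainProdInc (m l : ℕ) (r : ℕ) (p q : Fin m) : TQ m l :=
  ∑ c : Fin (r + 1) → Fin m, ∑ iv : Fin r → Fin l,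
    (if c 0 = p ∧ c (Fin.last r) = q ∧ (∀ a b : Fin r, a < b → iv a < iv b)
      then (1 : ℂ) else 0) •
      (List.ofFn fun a : Fin r =>
        xT (iv a) (c a.castSucc) (c a.succ) +
          ((-1 : ℂ) ^ (r - 1 - a.val)) • xiT (iv a) (c a.castSucc) (c a.succ)).prod

/-- The elements `z^{(r)}_{±q,p}` of `U(Q(m))^{⊗l}`:  the even (`sgn = false`,
giving `z^{(r)}_{q,p}`) resp. odd (`sgn = true`, giving `z^{(r)}_{-q,p}`) component of
`chainProdDec`, computed using the parity involution `σT` of `U(Q(m))^{⊗l}`;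
`z^{(0)}_{q,p} = δ_{qp}`, `z^{(0)}_{-q,p} = 0`. -/
def zDec {m l : ℕ} (σT : TQ m l →ₐ[ℂ] TQ m l) :
    ℕ → Bool → Fin m → Fin m → TQ m l
  | 0, sgn, q, p => if sgn then 0 else algebraMap ℂ (TQ m l) (kd q p)
  | r + 1, sgn, q, p =>
      (2⁻¹ : ℂ) • (chainProdDec m l (r + 1) p q +
        (if sgn then (-1 : ℂ) else 1) • σT (chainProdDec m l (r + 1) p q))

/-- The elements `z̃^{(r)}_{±q,p}` of `U(Q(m))^{⊗l}` (as `zDec`, with increasing chains). -/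
def zInc {m l : ℕ} (σT : TQ m l →ₐ[ℂ] TQ m l) :
    ℕ → Bool → Fin m → Fin m → TQ m l
  | 0, sgn, q, p => if sgn then 0 else algebraMap ℂ (TQ m l) (kd q p)
  | r + 1, sgn, q, p =>
      (2⁻¹ : ℂ) • (chainProdInc m l (r + 1) p q +
        (if sgn then (-1 : ℂ) else 1) • σT (chainProdInc m l (r + 1) p q))

/-- The explicit formula for the antipode value `S(T^{(r)}_{i,j})` (`r ≥ 1`):
`S(T^{(r)}_{i,j}) = Σ_{m=1}^{r} (-1)^m Σ_{i_1,…,i_{m-1}} Σ_{r_1+⋯+r_m=r, r_a>0}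
(-1)^{ν(i,i_1,…,i_{m-1},j)} T^{(r_1)}_{i,i_1} ⋯ T^{(r_m)}_{i_{m-1},j}` where
`ν(i_0,…,i_m) = Σ_{0≤k<s≤m-1} (p(i_k)+p(i_{k+1}))(p(i_s)+p(i_{s+1}))`. -/
def STval {n : ℕ} (r : ℕ) (i j : QIdx n) : YQ n :=
  ∑ m : Fin r,
    ((-1 : ℂ) ^ (m.val + 1)) •
      ∑ ch : Fin (m.val + 2) → QIdx n, ∑ c : Fin (m.val + 1) → Fin (r + 1),
        (if ch 0 = i ∧ ch (Fin.last (m.val + 1)) = j ∧ (∀ a, 1 ≤ (c a).val) ∧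
              (∑ a, (c a).val) = r
          then ((-1 : ℂ) ^ (∑ a : Fin (m.val + 1), ∑ b : Fin (m.val + 1),
              if a < b then
                (qpar (ch a.castSucc) + qpar (ch a.succ)) *
                  (qpar (ch b.castSucc) + qpar (ch b.succ))
              else 0))
          else 0) •
        (List.ofFn fun a : Fin (m.val + 1) =>
          TY (c a).val (ch a.castSucc) (ch a.succ)).prod

/-! ## Auxiliary development for statement9 -/

section Aux

open Finset

variable {n : ℕ}

lemma kd_self (i : Fin n) : kd i i = 1 := by simp [kd]

lemma kd_symm (i j : Fin n) : kd i j = kd j i := by simp [kd, eq_comm]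

lemma sum_kd_smul_left (j : Fin n) (v : Fin n → UQ n) :
    (∑ r, kd j r • v r) = v j := by
  rw [Finset.sum_eq_single j]
  · simp [kd]
  · intro b _ hb; simp [kd, Ne.symm hb]
  · intro hj; exact absurd (Finset.mem_univ j) hj

lemma sum_kd_smul_right (i : Fin n) (v : Fin n → UQ n) :
    (∑ r, kd r i • v r) = v i := by
  rw [Finset.sum_eq_single i]
  · simp [kd]
  · intro b _ hb; simp [kd, hb]
  · intro hj; exact absurd (Finset.mem_univ i) hj

lemma rel_ee (i j k l : Fin n) :
    Ue i j * Ue k l - Ue k l * Ue i j = kd j k • Ue i l - kd l i • Ue k j := by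
  have := RingQuot.mkAlgHom_rel ℂ (QRel.ee i j k l)
  simpa [Ue, map_sub, map_mul, map_smul] using this

lemma rel_ef (i j k l : Fin n) :
    Ue i j * Uf k l - Uf k l * Ue i j = kd j k • Uf i l - kd l i • Uf k j := by
  have := RingQuot.mkAlgHom_rel ℂ (QRel.ef i j k l)
  simpa [Ue, Uf, map_sub, map_mul, map_smul] using this

lemma rel_ff (i j k l : Fin n) :
    Uf i j * Uf k l + Uf k l * Uf i j = kd j k • Ue i l + kd l i • Ue k j := by
  have := RingQuot.mkAlgHom_rel ℂ (QRel.ff i j k l)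
  simpa [Ue, Uf, map_add, map_mul, map_smul] using this

lemma mul_ee (i j k l : Fin n) :
    Ue i j * Ue k l = Ue k l * Ue i j + kd j k • Ue i l - kd l i • Ue k j := by
  have := rel_ee i j k l; linear_combination (norm := abel) this

lemma mul_ef (i j k l : Fin n) :
    Ue i j * Uf k l = Uf k l * Ue i j + kd j k • Uf i l - kd l i • Uf k j := by
  have := rel_ef i j k l; linear_combination (norm := abel) this

lemma mul_fe (i j k l : Fin n) :
    Uf i j * Ue k l = Ue k l * Uf i j + kd j k • Uf i l - kd l i • Uf k j := by
  have := rel_ef k l i j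
  have h2 : Uf i j * Ue k l = Ue k l * Uf i j - (kd l i • Uf k j - kd j k • Uf i l) := by
    linear_combination (norm := abel) -this
  rw [h2]; abel

lemma mul_ff (i j k l : Fin n) :
    Uf i j * Uf k l = -(Uf k l * Uf i j) + kd j k • Ue i l + kd l i • Ue k j := by
  have := rel_ff i j k l; linear_combination (norm := abel) this

lemma eU_zero (i j : Fin n) : eU 0 i j = algebraMap ℂ (UQ n) (kd i j) := rfl
lemma fU_zero (i j : Fin n) : fU 0 i j = 0 := rfl

lemma eU_succ (m : ℕ) (i j : Fin n) :
    eU (m+1) i j = (∑ k, Ue i k * eU m k j) + (-1:ℂ)^m • ∑ k, Uf i k * fU m k j := rfl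

lemma fU_succ (m : ℕ) (i j : Fin n) :
    fU (m+1) i j = (∑ k, Ue i k * fU m k j) + (-1:ℂ)^m • ∑ k, Uf i k * eU m k j := rfl

end Aux
section Swap

open Finset

variable {n : ℕ}

lemma kd_mul_comm (i j k l : Fin n) : kd j k * kd i l = kd l i * kd k j := by
  by_cases h1 : j = k <;> by_cases h2 : i = l <;>
    simp [kd, h1, h2, eq_comm]

lemma mul_algC (x : UQ n) (c : ℂ) : x * algebraMap ℂ (UQ n) c = c • x := by
  rw [Algebra.smul_def, ← Algebra.commutes]

lemma algC_mul (x : UQ n) (c : ℂ) : algebraMap ℂ (UQ n) c * x = c • x := by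
  rw [Algebra.smul_def]

lemma neg_one_pow_double (k : ℕ) : ((-1:ℂ))^(k*2) = 1 := by
  rw [mul_comm, pow_mul, neg_one_sq, one_pow]

lemma neg_one_pow_double' (k : ℕ) : ((-1:ℂ))^(2*k) = 1 := by
  rw [pow_mul, neg_one_sq, one_pow]

lemma negmulUQ (a b : UQ n) : -a * b = -(a*b) := neg_mul a b
lemma mulnegUQ (a b : UQ n) : a * -b = -(a*b) := mul_neg a b

lemma smul_algC (c d : ℂ) : c • (algebraMap ℂ (UQ n) d) = algebraMap ℂ (UQ n) (c*d) := by
  rw [Algebra.smul_def, ← map_mul]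

lemma swap_eU_fU (m : ℕ) : ∀ i j k l : Fin n,
    (Ue i j * eU m k l = eU m k l * Ue i j + kd j k • eU m i l - kd l i • eU m k j) ∧
    (Ue i j * fU m k l = fU m k l * Ue i j + kd j k • fU m i l - kd l i • fU m k j) ∧
    (Uf i j * eU m k l = eU m k l * Uf i j + ((-1:ℂ)^(m+1) * kd j k) • fU m i l - kd l i • fU m k j) ∧
    (Uf i j * fU m k l = -(fU m k l * Uf i j) + ((-1:ℂ)^(m+1) * kd j k) • eU m i l + kd l i • eU m k j) := by
  induction m with
  | zero =>
      intro i j k l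
      refine ⟨?_, ?_, ?_, ?_⟩
      · simp only [eU_zero, mul_algC, algC_mul, smul_algC, kd_mul_comm i j k l]
        abel
      · simp [fU_zero]
      · simp [eU_zero, fU_zero, mul_algC, algC_mul, kd_symm k l]
      · simp only [fU_zero, eU_zero, mul_zero, zero_mul, neg_zero, zero_add]
        rw [smul_algC, smul_algC, ← map_add]
        have : ((-1:ℂ)^(0+1) * kd j k) * kd i l + kd l i * kd k j = 0 := by
          by_cases h1 : j = k <;> by_cases h2 : i = l <;>
            simp [kd, h1, h2, eq_comm] <;> ring
        rw [this, map_zero]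
  | succ m ih =>
      intro i j k l
      refine ⟨?_, ?_, ?_, ?_⟩
      · -- Ue i j * eU (m+1) k l
        have e1 : ∀ r : Fin n, Ue i j * (Ue k r * eU m r l)
            = Ue k r * (eU m r l * Ue i j) + kd j r • (Ue k r * eU m i l)
              - kd l i • (Ue k r * eU m r j) + kd j k • (Ue i r * eU m r l)
              - kd r i • (Ue k j * eU m r l) := by
          intro r
          rw [← mul_assoc, mul_ee i j k r, sub_mul, add_mul, mul_assoc, (ih i j r l).1,
              smul_mul_assoc, smul_mul_assoc]
          simp only [mul_add, mul_sub, mul_smul_comm]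
        have f1 : ∀ r : Fin n, Ue i j * (Uf k r * fU m r l)
            = Uf k r * (fU m r l * Ue i j) + kd j r • (Uf k r * fU m i l)
              - kd l i • (Uf k r * fU m r j) + kd j k • (Uf i r * fU m r l)
              - kd r i • (Uf k j * fU m r l) := by
          intro r
          rw [← mul_assoc, mul_ef i j k r, sub_mul, add_mul, mul_assoc, (ih i j r l).2.1,
              smul_mul_assoc, smul_mul_assoc]
          simp only [mul_add, mul_sub, mul_smul_comm]
        rw [eU_succ, eU_succ, eU_succ, mul_add, Finset.mul_sum, mul_smul_comm, Finset.mul_sum]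
        rw [Finset.sum_congr rfl (fun r _ => e1 r), Finset.sum_congr rfl (fun r _ => f1 r)]
        simp only [Finset.sum_add_distrib, Finset.sum_sub_distrib, ← Finset.smul_sum,
          sum_kd_smul_left, sum_kd_smul_right]
        simp only [add_mul, smul_mul_assoc, Finset.sum_mul, mul_assoc, smul_add, smul_sub,
          smul_smul]
        module
      · -- Ue i j * fU (m+1) k l
        have e2 : ∀ r : Fin n, Ue i j * (Ue k r * fU m r l)
            = Ue k r * (fU m r l * Ue i j) + kd j r • (Ue k r * fU m i l)
              - kd l i • (Ue k r * fU m r j) + kd j k • (Ue i r * fU m r l)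
              - kd r i • (Ue k j * fU m r l) := by
          intro r
          rw [← mul_assoc, mul_ee i j k r]
          simp only [add_mul, sub_mul, negmulUQ, smul_mul_assoc, mul_assoc]
          rw [(ih i j r l).2.1]
          simp only [mul_add, mul_sub, mulnegUQ, mul_smul_comm]
          all_goals module
        have f2 : ∀ r : Fin n, Ue i j * (Uf k r * eU m r l)
            = Uf k r * (eU m r l * Ue i j) + kd j r • (Uf k r * eU m i l)
              - kd l i • (Uf k r * eU m r j) + kd j k • (Uf i r * eU m r l)
              - kd r i • (Uf k j * eU m r l) := by
          intro r
          rw [← mul_assoc, mul_ef i j k r]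
          simp only [add_mul, sub_mul, negmulUQ, smul_mul_assoc, mul_assoc]
          rw [(ih i j r l).1]
          simp only [mul_add, mul_sub, mulnegUQ, mul_smul_comm]
          all_goals module
        rw [fU_succ, fU_succ, fU_succ, mul_add, Finset.mul_sum, mul_smul_comm, Finset.mul_sum]
        rw [Finset.sum_congr rfl (fun r _ => e2 r), Finset.sum_congr rfl (fun r _ => f2 r)]
        simp only [Finset.sum_add_distrib, Finset.sum_sub_distrib, ← smul_smul, ← Finset.smul_sum,
          sum_kd_smul_left, sum_kd_smul_right]
        simp only [add_mul, smul_mul_assoc, Finset.sum_mul, mul_assoc, smul_add, smul_sub,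
          smul_smul]
        module
      · -- Uf i j * eU (m+1) k l
        have e3 : ∀ r : Fin n, Uf i j * (Ue k r * eU m r l)
            = Ue k r * (eU m r l * Uf i j) + ((-1:ℂ)^(m+1) * kd j r) • (Ue k r * fU m i l)
              - kd l i • (Ue k r * fU m r j) + kd j k • (Uf i r * eU m r l)
              - kd r i • (Uf k j * eU m r l) := by
          intro r
          rw [← mul_assoc, mul_fe i j k r]
          simp only [add_mul, sub_mul, negmulUQ, smul_mul_assoc, mul_assoc]
          rw [(ih i j r l).2.2.1]
          simp only [mul_add, mul_sub, mulnegUQ, mul_smul_comm]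
          all_goals module
        have f3 : ∀ r : Fin n, Uf i j * (Uf k r * fU m r l)
            = Uf k r * (fU m r l * Uf i j) - ((-1:ℂ)^(m+1) * kd j r) • (Uf k r * eU m i l)
              - kd l i • (Uf k r * eU m r j) + kd j k • (Ue i r * fU m r l)
              + kd r i • (Ue k j * fU m r l) := by
          intro r
          rw [← mul_assoc, mul_ff i j k r, add_mul, add_mul, negmulUQ, mul_assoc,
            (ih i j r l).2.2.2]
          simp only [smul_mul_assoc, mul_assoc, mul_add, mul_sub, mulnegUQ, mul_smul_comm,
            neg_add, neg_neg, neg_smul]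
          all_goals module
        rw [eU_succ, fU_succ, fU_succ, mul_add, Finset.mul_sum, mul_smul_comm, Finset.mul_sum]
        rw [Finset.sum_congr rfl (fun r _ => e3 r), Finset.sum_congr rfl (fun r _ => f3 r)]
        simp only [Finset.sum_add_distrib, Finset.sum_sub_distrib, ← smul_smul, ← Finset.smul_sum,
          sum_kd_smul_left, sum_kd_smul_right]
        simp only [add_mul, smul_mul_assoc, Finset.sum_mul, mul_assoc, smul_add, smul_sub,
          smul_smul]
        match_scalars <;> ring_nf <;> simp [neg_one_pow_double, neg_one_pow_double'] <;> ring_nf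
      · -- Uf i j * fU (m+1) k l
        have e4 : ∀ r : Fin n, Uf i j * (Ue k r * fU m r l)
            = -(Ue k r * (fU m r l * Uf i j)) + ((-1:ℂ)^(m+1) * kd j r) • (Ue k r * eU m i l)
              + kd l i • (Ue k r * eU m r j) + kd j k • (Uf i r * fU m r l)
              - kd r i • (Uf k j * fU m r l) := by
          intro r
          rw [← mul_assoc, mul_fe i j k r]
          simp only [add_mul, sub_mul, negmulUQ, smul_mul_assoc, mul_assoc]
          rw [(ih i j r l).2.2.2]
          simp only [mul_add, mul_sub, mulnegUQ, mul_smul_comm]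
          all_goals module
        have f4 : ∀ r : Fin n, Uf i j * (Uf k r * eU m r l)
            = -(Uf k r * (eU m r l * Uf i j)) - ((-1:ℂ)^(m+1) * kd j r) • (Uf k r * fU m i l)
              + kd l i • (Uf k r * fU m r j) + kd j k • (Ue i r * eU m r l)
              + kd r i • (Ue k j * eU m r l) := by
          intro r
          rw [← mul_assoc, mul_ff i j k r, add_mul, add_mul, negmulUQ, mul_assoc,
            (ih i j r l).2.2.1]
          simp only [smul_mul_assoc, mul_assoc, mul_add, mul_sub, mulnegUQ, mul_smul_comm,
            neg_add, neg_neg, neg_smul]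
          all_goals module
        rw [fU_succ, eU_succ, eU_succ, mul_add, Finset.mul_sum, mul_smul_comm, Finset.mul_sum]
        rw [Finset.sum_congr rfl (fun r _ => e4 r), Finset.sum_congr rfl (fun r _ => f4 r)]
        simp only [Finset.sum_add_distrib, Finset.sum_sub_distrib, ← smul_smul, ← Finset.smul_sum,
          sum_kd_smul_left, sum_kd_smul_right]
        simp only [add_mul, smul_mul_assoc, Finset.sum_mul, mul_assoc, smul_add, smul_sub,
          smul_smul, negmulUQ, Finset.sum_neg_distrib, smul_neg]
        match_scalars <;> ring_nf <;> simp [neg_one_pow_double, neg_one_pow_double'] <;> ring_nf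

end Swap
section Blocks

open Finset

variable {n l : ℕ}

lemma bidx_val (h : l ∣ n) (p : Fin (n/l)) (a : Fin l) :
    (bidx h p a).val = l * p.val + a.val := rfl

lemma bidx_inj (h : l ∣ n) {p q : Fin (n/l)} {a b : Fin l} :
    bidx h p a = bidx h q b ↔ p = q ∧ a = b := by
  constructor
  · intro he
    have hv : l * p.val + a.val = l * q.val + b.val := congrArg Fin.val he
    have hl : 0 < l := Nat.lt_of_le_of_lt (Nat.zero_le _) a.isLt
    have hp : p.val = q.val := by
      have hq : (l * p.val + a.val) / l = (l * q.val + b.val) / l := by rw [hv]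
      rwa [Nat.mul_add_div hl, Nat.mul_add_div hl, Nat.div_eq_of_lt a.isLt,
        Nat.div_eq_of_lt b.isLt, add_zero, add_zero] at hq
    have ha : a.val = b.val := by
      rw [hp] at hv; omega
    exact ⟨Fin.ext hp, Fin.ext ha⟩
  · rintro ⟨rfl, rfl⟩; rfl

lemma sum_bidx (h : l ∣ n) {M : Type} [AddCommMonoid M] (hl : 0 < l) (f : Fin n → M) :
    ∑ k, f k = ∑ s : Fin (n/l), ∑ c : Fin l, f (bidx h s c) := by
  have hbij : Function.Bijective (fun x : Fin (n/l) × Fin l => bidx h x.1 x.2) := by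
    rw [Fintype.bijective_iff_injective_and_card]
    constructor
    · intro x y hxy
      obtain ⟨h1, h2⟩ := (bidx_inj h).1 hxy
      exact Prod.ext h1 h2
    · simp [Nat.div_mul_cancel h]
  rw [← Fintype.sum_bijective _ hbij (fun x : Fin (n/l) × Fin l => f (bidx h x.1 x.2)) f
    (fun x => rfl), Fintype.sum_prod_type]

lemma mem_Ichi_mul_m (h : l ∣ n) (u : UQ n) {x : UQ n} (hx : x ∈ mSet n l h) :
    u * x ∈ Ichi n l h := by
  simpa [smul_eq_mul] using Submodule.smul_mem (Ichi n l h) u (Submodule.subset_span hx)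

lemma mul_Uf_mem_Ichi (h : l ∣ n) (u : UQ n) (p q : Fin (n/l)) (a b : Fin l)
    (hba : b.val < a.val) : u * Uf (bidx h p a) (bidx h q b) ∈ Ichi n l h :=
  mem_Ichi_mul_m h u ⟨p, q, a, b, hba, Or.inr rfl⟩

lemma mul_Ue_chi_mem_Ichi (h : l ∣ n) (u : UQ n) (p q : Fin (n/l)) (a b : Fin l)
    (hba : b.val < a.val) :
    u * Ue (bidx h p a) (bidx h q b) - (if a.val = b.val + 1 ∧ p = q then (1:ℂ) else 0) • u
      ∈ Ichi n l h := by
  have h1 := mem_Ichi_mul_m h u ⟨p, q, a, b, hba, Or.inl rfl⟩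
  have h2 : u * (Ue (bidx h p a) (bidx h q b) -
      (algebraMap ℂ (UQ n)) (if a.val = b.val + 1 ∧ p = q then 1 else 0)) =
      u * Ue (bidx h p a) (bidx h q b) -
        (if a.val = b.val + 1 ∧ p = q then (1:ℂ) else 0) • u := by
    rw [mul_sub, mul_algC]
  rwa [h2] at h1

lemma Ue_mem_pSet (h : l ∣ n) (p q : Fin (n/l)) (a b : Fin l) (hab : a.val ≤ b.val) :
    Ue (bidx h p a) (bidx h q b) ∈ pSet n l h := ⟨p, q, a, b, hab, Or.inl rfl⟩

lemma Uf_mem_pSet (h : l ∣ n) (p q : Fin (n/l)) (a b : Fin l) (hab : a.val ≤ b.val) :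
    Uf (bidx h p a) (bidx h q b) ∈ pSet n l h := ⟨p, q, a, b, hab, Or.inr rfl⟩

lemma Ue_mem_nSet (h : l ∣ n) (p q : Fin (n/l)) (a b : Fin l) (hab : a.val < b.val) :
    Ue (bidx h p a) (bidx h q b) ∈ nSet n l h := ⟨p, q, a, b, hab, Or.inl rfl⟩

lemma Uf_mem_nSet (h : l ∣ n) (p q : Fin (n/l)) (a b : Fin l) (hab : a.val < b.val) :
    Uf (bidx h p a) (bidx h q b) ∈ nSet n l h := ⟨p, q, a, b, hab, Or.inr rfl⟩

lemma nSet_subset_Lspan (h : l ∣ n) {g : UQ n} (hg : g ∈ nSet n l h) :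
    g ∈ Lspan n l h := by
  apply Submodule.subset_span
  exact ⟨1, Subalgebra.one_mem _, g, hg, (one_mul g).symm⟩

lemma adjoin_mul_nSet_mem_Lspan (h : l ∣ n) {u g : UQ n}
    (hu : u ∈ Algebra.adjoin ℂ (pSet n l h)) (hg : g ∈ nSet n l h) :
    u * g ∈ Lspan n l h :=
  Submodule.subset_span ⟨u, hu, g, hg, rfl⟩

lemma adjoin_mul_Lspan (h : l ∣ n) {u w : UQ n}
    (hu : u ∈ Algebra.adjoin ℂ (pSet n l h)) (hw : w ∈ Lspan n l h) :
    u * w ∈ Lspan n l h := by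
  induction hw using Submodule.span_induction with
  | mem x hx =>
      obtain ⟨v, hv, g, hg, rfl⟩ := hx
      rw [← mul_assoc]
      exact adjoin_mul_nSet_mem_Lspan h (Subalgebra.mul_mem _ hu hv) hg
  | zero => simp
  | add x y _ _ hx hy => rw [mul_add]; exact Submodule.add_mem _ hx hy
  | smul c x _ hx => rw [mul_smul_comm]; exact Submodule.smul_mem _ c hx

end Blocks
section Diag

open Finset

variable {n l : ℕ}

lemma kd_smul_mem {x y : Fin n} {w : UQ n} (S : Submodule ℂ (UQ n))
    (hw : x = y → w ∈ S) : kd x y • w ∈ S := by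
  by_cases hxy : x = y
  · simpa [kd, hxy] using hw hxy
  · simp only [kd, if_neg hxy, zero_smul]; exact S.zero_mem

def g0Gen (h : l ∣ n) (x : UQ n) : Prop :=
  ∃ (s t : Fin (n/l)) (a : Fin l),
    x = Ue (bidx h s a) (bidx h t a) ∨ x = Uf (bidx h s a) (bidx h t a)

def diagW (h : l ∣ n) : Set (UQ n) :=
  { x | ∃ L : List (UQ n), (∀ d ∈ L, g0Gen h d) ∧ x = L.prod }

lemma g0Gen_mem_adjoin (h : l ∣ n) {d : UQ n} (hd : g0Gen h d) :
    d ∈ Algebra.adjoin ℂ (pSet n l h) := by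
  obtain ⟨s, t, a, hd⟩ := hd
  rcases hd with rfl | rfl
  · exact Algebra.subset_adjoin (Ue_mem_pSet h s t a a le_rfl)
  · exact Algebra.subset_adjoin (Uf_mem_pSet h s t a a le_rfl)

lemma nGen_mul_diagList (h : l ∣ n) : ∀ (L : List (UQ n)), (∀ d ∈ L, g0Gen h d) →
    ∀ {g : UQ n}, g ∈ nSet n l h → g * L.prod ∈ Lspan n l h := by
  intro L
  induction L with
  | nil => intro _ g hg; simpa using nSet_subset_Lspan h hg
  | cons d L ih =>
      intro hall g hg
      have hd : g0Gen h d := hall d List.mem_cons_self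
      have hL : ∀ x ∈ L, g0Gen h x := fun x hx => hall x (List.mem_cons_of_mem _ hx)
      obtain ⟨s, t, a, hd⟩ := hd
      obtain ⟨p1, q1, a1, c1, h1, hge⟩ := hg
      rw [List.prod_cons, ← mul_assoc]
      have hdiagU : Ue (bidx h s a) (bidx h t a) * (g * L.prod) ∈ Lspan n l h := by
        rcases hge with rfl | rfl <;>
          exact adjoin_mul_Lspan h (Algebra.subset_adjoin (Ue_mem_pSet h s t a a le_rfl))
            (ih hL ⟨p1, q1, a1, c1, h1, by simp⟩)
      have hdiagF : Uf (bidx h s a) (bidx h t a) * (g * L.prod) ∈ Lspan n l h := by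
        rcases hge with rfl | rfl <;>
          exact adjoin_mul_Lspan h (Algebra.subset_adjoin (Uf_mem_pSet h s t a a le_rfl))
            (ih hL ⟨p1, q1, a1, c1, h1, by simp⟩)
      rcases hge with rfl | rfl <;> rcases hd with rfl | rfl
      · -- g = Ue, d = Ue
        rw [mul_ee, sub_mul, add_mul, smul_mul_assoc, smul_mul_assoc, mul_assoc]
        refine Submodule.sub_mem _ (Submodule.add_mem _ hdiagU ?_) ?_
        · refine kd_smul_mem _ (fun heq => ?_)
          obtain ⟨hq, hc⟩ := (bidx_inj h).1 heq
          exact ih hL (Ue_mem_nSet h p1 t a1 a (by rw [← hc]; exact h1))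
        · refine kd_smul_mem _ (fun heq => ?_)
          obtain ⟨hq, hc⟩ := (bidx_inj h).1 heq
          exact ih hL (Ue_mem_nSet h s q1 a c1 (by rw [hc]; exact h1))
      · -- g = Ue, d = Uf
        rw [mul_ef, sub_mul, add_mul, smul_mul_assoc, smul_mul_assoc, mul_assoc]
        refine Submodule.sub_mem _ (Submodule.add_mem _ hdiagF ?_) ?_
        · refine kd_smul_mem _ (fun heq => ?_)
          obtain ⟨hq, hc⟩ := (bidx_inj h).1 heq
          exact ih hL (Uf_mem_nSet h p1 t a1 a (by rw [← hc]; exact h1))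
        · refine kd_smul_mem _ (fun heq => ?_)
          obtain ⟨hq, hc⟩ := (bidx_inj h).1 heq
          exact ih hL (Uf_mem_nSet h s q1 a c1 (by rw [hc]; exact h1))
      · -- g = Uf, d = Ue
        rw [mul_fe, sub_mul, add_mul, smul_mul_assoc, smul_mul_assoc, mul_assoc]
        refine Submodule.sub_mem _ (Submodule.add_mem _ hdiagU ?_) ?_
        · refine kd_smul_mem _ (fun heq => ?_)
          obtain ⟨hq, hc⟩ := (bidx_inj h).1 heq
          exact ih hL (Uf_mem_nSet h p1 t a1 a (by rw [← hc]; exact h1))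
        · refine kd_smul_mem _ (fun heq => ?_)
          obtain ⟨hq, hc⟩ := (bidx_inj h).1 heq
          exact ih hL (Uf_mem_nSet h s q1 a c1 (by rw [hc]; exact h1))
      · -- g = Uf, d = Uf
        rw [mul_ff, add_mul, add_mul, negmulUQ, mul_assoc, smul_mul_assoc, smul_mul_assoc]
        refine Submodule.add_mem _ (Submodule.add_mem _ (Submodule.neg_mem _ hdiagF) ?_) ?_
        · refine kd_smul_mem _ (fun heq => ?_)
          obtain ⟨hq, hc⟩ := (bidx_inj h).1 heq
          exact ih hL (Ue_mem_nSet h p1 t a1 a (by rw [← hc]; exact h1))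
        · refine kd_smul_mem _ (fun heq => ?_)
          obtain ⟨hq, hc⟩ := (bidx_inj h).1 heq
          exact ih hL (Ue_mem_nSet h s q1 a c1 (by rw [hc]; exact h1))

lemma nGen_mul_diagSpan (h : l ∣ n) {g x : UQ n} (hg : g ∈ nSet n l h)
    (hx : x ∈ Submodule.span ℂ (diagW h)) : g * x ∈ Lspan n l h := by
  induction hx using Submodule.span_induction with
  | mem w hw => obtain ⟨L, hL, rfl⟩ := hw; exact nGen_mul_diagList h L hL hg
  | zero => simp
  | add x y _ _ hx hy => rw [mul_add]; exact Submodule.add_mem _ hx hy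
  | smul c x _ hx => rw [mul_smul_comm]; exact Submodule.smul_mem _ c hx

lemma g0Gen_mul_diagSpan (h : l ∣ n) {d x : UQ n} (hd : g0Gen h d)
    (hx : x ∈ Submodule.span ℂ (diagW h)) : d * x ∈ Submodule.span ℂ (diagW h) := by
  induction hx using Submodule.span_induction with
  | mem w hw =>
      obtain ⟨L, hL, rfl⟩ := hw
      refine Submodule.subset_span ⟨d :: L, ?_, (List.prod_cons).symm⟩
      intro x hx
      rcases List.mem_cons.1 hx with rfl | hx
      · exact hd
      · exact hL x hx
  | zero => simp
  | add x y _ _ hx hy => rw [mul_add]; exact Submodule.add_mem _ hx hy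
  | smul c x _ hx => rw [mul_smul_comm]; exact Submodule.smul_mem _ c hx

def DD (h : l ∣ n) (ε : ℂ) : ℕ → Fin (n/l) → Fin l → Fin (n/l) → UQ n
  | 0, p, i, q => if i.val = 0 ∧ p = q then 1 else 0
  | (m+1), p, i, q =>
      (if _hi : 0 < i.val then
        DD h ε m p ⟨i.val - 1, Nat.lt_of_le_of_lt (Nat.sub_le _ _) i.isLt⟩ q else 0) +
      ∑ s, (Ue (bidx h p i) (bidx h s i) + (ε * (-1:ℂ)^m) • Uf (bidx h p i) (bidx h s i)) *
        DD h ε m s i q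

lemma DD_mem_diagSpan (h : l ∣ n) (ε : ℂ) :
    ∀ (m : ℕ) (p : Fin (n/l)) (i : Fin l) (q : Fin (n/l)),
      DD h ε m p i q ∈ Submodule.span ℂ (diagW h) := by
  intro m
  induction m with
  | zero =>
      intro p i q
      show (if i.val = 0 ∧ p = q then (1:UQ n) else 0) ∈ _
      split
      · exact Submodule.subset_span ⟨[], by simp, by simp⟩
      · exact Submodule.zero_mem _
  | succ m ih =>
      intro p i q
      show (if _hi : 0 < i.val then
          DD h ε m p ⟨i.val - 1, Nat.lt_of_le_of_lt (Nat.sub_le _ _) i.isLt⟩ q else 0) +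
        ∑ s, (Ue (bidx h p i) (bidx h s i) + (ε * (-1:ℂ)^m) • Uf (bidx h p i) (bidx h s i)) *
          DD h ε m s i q ∈ _
      refine Submodule.add_mem _ ?_ (Submodule.sum_mem _ (fun s _ => ?_))
      · split
        · exact ih _ _ _
        · exact Submodule.zero_mem _
      · rw [add_mul, smul_mul_assoc]
        refine Submodule.add_mem _ ?_ (Submodule.smul_mem _ _ ?_)
        · exact g0Gen_mul_diagSpan h ⟨p, s, i, Or.inl rfl⟩ (ih _ _ _)
        · exact g0Gen_mul_diagSpan h ⟨p, s, i, Or.inr rfl⟩ (ih _ _ _)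

lemma adjoin_mul_I (h : l ∣ n) {u w : UQ n}
    (hu : u ∈ Algebra.adjoin ℂ (pSet n l h))
    (hw : w ∈ (Ichi n l h).restrictScalars ℂ ⊔ Lspan n l h) :
    u * w ∈ (Ichi n l h).restrictScalars ℂ ⊔ Lspan n l h := by
  obtain ⟨w1, hw1, w2, hw2, rfl⟩ := Submodule.mem_sup.1 hw
  rw [mul_add]
  refine Submodule.add_mem _ (Submodule.mem_sup_left ?_) (Submodule.mem_sup_right ?_)
  · exact Submodule.smul_mem (Ichi n l h) u hw1
  · exact adjoin_mul_Lspan h hu hw2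

lemma Ichi_sub_mem_I (h : l ∣ n) {w : UQ n} (hw : w ∈ Ichi n l h) :
    w ∈ (Ichi n l h).restrictScalars ℂ ⊔ Lspan n l h :=
  Submodule.mem_sup_left hw

end Diag
section GM

open Finset

variable {n l : ℕ}

def gMQ (ε : ℂ) (m : ℕ) (x y : Fin n) : UQ n := eU m x y + ε • fU m x y

lemma gMQ_zero (ε : ℂ) (x y : Fin n) :
    gMQ ε 0 x y = algebraMap ℂ (UQ n) (kd x y) := by
  simp [gMQ, eU_zero, fU_zero]

lemma gMQ_succ (ε : ℂ) (hε : ε * ε = 1) (m : ℕ) (x y : Fin n) :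
    gMQ ε (m+1) x y = ∑ k, (Ue x k + (ε * (-1:ℂ)^m) • Uf x k) * gMQ ε m k y := by
  unfold gMQ
  rw [eU_succ, fU_succ]
  simp only [mul_add, add_mul, smul_mul_assoc, Finset.sum_add_distrib, smul_add,
    mul_smul_comm, smul_smul]
  simp only [← Finset.smul_sum]
  match_scalars <;> first
    | ring1
    | linear_combination ((-1:ℂ)^m) * hε
    | linear_combination (-((-1:ℂ)^m)) * hε
    | linear_combination hε
    | linear_combination (-1:ℂ) * hε

lemma head_swap (m : ℕ) (ε : ℂ) (hε : ε * ε = 1) (x k y : Fin n) (hxy : kd y x = 0) :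
    (Ue x k + (ε * (-1:ℂ)^m) • Uf x k) * (eU m k y + ε • fU m k y)
      = (eU m k y + ε • fU m k y) * Ue x k
        + (ε * (-1:ℂ)^m) • ((eU m k y - ε • fU m k y) * Uf x k) := by
  have S1 := (swap_eU_fU m x k k y).1
  have S2 := (swap_eU_fU m x k k y).2.1
  have S3 := (swap_eU_fU m x k k y).2.2.1
  have S4 := (swap_eU_fU m x k k y).2.2.2
  rw [kd_self, hxy] at S1 S2 S3 S4
  simp only [one_smul, zero_smul, mul_one, sub_zero, mul_zero, one_mul, add_zero] at S1 S2 S3 S4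
  simp only [add_mul, mul_add, smul_mul_assoc, mul_smul_comm, sub_mul, smul_add, smul_sub,
    smul_smul]
  rw [S1, S2, S3, S4]
  simp only [mul_add, smul_add, smul_smul, mulnegUQ, smul_neg, mul_neg]
  match_scalars <;> (try simp only [neg_one_pow_double, neg_one_pow_double']) <;> first
    | ring1
    | linear_combination ((-1:ℂ)^m) * hε
    | linear_combination (-((-1:ℂ)^m)) * hε
    | linear_combination hε
    | linear_combination (-1:ℂ) * hε
    | (ring_nf; simp only [neg_one_pow_double, neg_one_pow_double']; first
        | ring1
        | linear_combination hε
        | linear_combination (-1:ℂ) * hε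
        | linear_combination ((-1:ℂ)^m) * hε
        | linear_combination (-((-1:ℂ)^m)) * hε
        | linear_combination ε * hε
        | linear_combination (-ε) * hε)

end GM
section Main

open Finset

variable {n l : ℕ}

def Rfun (h : l ∣ n) (ε : ℂ) (m : ℕ) (p : Fin (n/l)) (i : Fin l) (q : Fin (n/l))
    (s : Fin (n/l)) (c : Fin l) : UQ n :=
  (if i.val = c.val + 1 ∧ p = s then (1:ℂ) else 0) • DD h ε m s c q +
  (if c = i then
    (Ue (bidx h p i) (bidx h s i) + (ε * (-1:ℂ)^m) • Uf (bidx h p i) (bidx h s i)) *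
      DD h ε m s i q else 0)

lemma key_term (h : l ∣ n) (hl : 0 < l) (ε : ℂ) (hε : ε * ε = 1) (q : Fin (n/l)) (m : ℕ)
    (p : Fin (n/l)) (i : Fin l)
    (IH : ∀ (s : Fin (n/l)) (c : Fin l),
      gMQ ε m (bidx h s c) (bidx h q ⟨0, hl⟩) - DD h ε m s c q
        ∈ (Ichi n l h).restrictScalars ℂ ⊔ Lspan n l h)
    (s : Fin (n/l)) (c : Fin l) :
    (Ue (bidx h p i) (bidx h s c) + (ε * (-1:ℂ)^m) • Uf (bidx h p i) (bidx h s c)) *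
        gMQ ε m (bidx h s c) (bidx h q ⟨0, hl⟩) - Rfun h ε m p i q s c
      ∈ (Ichi n l h).restrictScalars ℂ ⊔ Lspan n l h := by
  rcases lt_trichotomy c.val i.val with hci | hci | hci
  · -- c < i : head lies in m, use χ-reduction
    have hcni : ¬(c = i) := fun he => by rw [he] at hci; exact lt_irrefl _ hci
    have hxy : kd (bidx h q ⟨0, hl⟩) (bidx h p i) = 0 := by
      rw [kd, if_neg]
      intro he
      obtain ⟨_, h2⟩ := (bidx_inj h).1 he
      have : i.val = 0 := by simpa using (congrArg Fin.val h2).symm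
      omega
    have hsw := head_swap m ε hε (bidx h p i) (bidx h s c) (bidx h q ⟨0, hl⟩) hxy
    have hdecomp :
        (Ue (bidx h p i) (bidx h s c) + (ε * (-1:ℂ)^m) • Uf (bidx h p i) (bidx h s c)) *
          gMQ ε m (bidx h s c) (bidx h q ⟨0, hl⟩) - Rfun h ε m p i q s c
        = (gMQ ε m (bidx h s c) (bidx h q ⟨0, hl⟩) * Ue (bidx h p i) (bidx h s c)
            - (if i.val = c.val + 1 ∧ p = s then (1:ℂ) else 0) •
                gMQ ε m (bidx h s c) (bidx h q ⟨0, hl⟩))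
          + (ε * (-1:ℂ)^m) • ((eU m (bidx h s c) (bidx h q ⟨0, hl⟩)
              - ε • fU m (bidx h s c) (bidx h q ⟨0, hl⟩)) * Uf (bidx h p i) (bidx h s c))
          + (if i.val = c.val + 1 ∧ p = s then (1:ℂ) else 0) •
              (gMQ ε m (bidx h s c) (bidx h q ⟨0, hl⟩) - DD h ε m s c q) := by
      rw [Rfun, if_neg hcni, add_zero]
      simp only [gMQ]
      rw [hsw]
      module
    rw [hdecomp]
    refine Submodule.add_mem _ (Submodule.add_mem _ ?_ ?_) ?_
    · exact Submodule.mem_sup_left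
        (mul_Ue_chi_mem_Ichi h _ p s i c hci)
    · exact Submodule.mem_sup_left
        (Submodule.smul_mem _ _ (mul_Uf_mem_Ichi h _ p s i c hci))
    · exact Submodule.smul_mem _ _ (IH s c)
  · -- c = i : diagonal head
    have hc : c = i := Fin.ext hci
    rw [hc]
    have hR : Rfun h ε m p i q s i
        = (Ue (bidx h p i) (bidx h s i) + (ε * (-1:ℂ)^m) • Uf (bidx h p i) (bidx h s i)) *
            DD h ε m s i q := by
      rw [Rfun, if_neg (by rintro ⟨h1, -⟩; omega : ¬(i.val = i.val + 1 ∧ p = s)), zero_smul,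
        zero_add, if_pos rfl]
    rw [hR, ← mul_sub]
    refine adjoin_mul_I h ?_ (IH s i)
    exact Subalgebra.add_mem _
      (Algebra.subset_adjoin (Ue_mem_pSet h p s i i le_rfl))
      (Subalgebra.smul_mem _ (Algebra.subset_adjoin (Uf_mem_pSet h p s i i le_rfl)) _)
  · -- c > i : head lies in the nilradical
    have hcni : ¬(c = i) := fun he => by rw [he] at hci; exact lt_irrefl _ hci
    have hR0 : Rfun h ε m p i q s c = 0 := by
      rw [Rfun, if_neg (by rintro ⟨h1, -⟩; omega : ¬(i.val = c.val + 1 ∧ p = s)), zero_smul,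
        zero_add, if_neg hcni]
    have hdecomp :
        (Ue (bidx h p i) (bidx h s c) + (ε * (-1:ℂ)^m) • Uf (bidx h p i) (bidx h s c)) *
          gMQ ε m (bidx h s c) (bidx h q ⟨0, hl⟩) - Rfun h ε m p i q s c
        = (Ue (bidx h p i) (bidx h s c) + (ε * (-1:ℂ)^m) • Uf (bidx h p i) (bidx h s c)) *
            (gMQ ε m (bidx h s c) (bidx h q ⟨0, hl⟩) - DD h ε m s c q)
          + (Ue (bidx h p i) (bidx h s c) * DD h ε m s c q
              + (ε * (-1:ℂ)^m) • (Uf (bidx h p i) (bidx h s c) * DD h ε m s c q)) := by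
      rw [hR0, sub_zero]
      simp only [mul_sub, add_mul, smul_mul_assoc]
      module
    rw [hdecomp]
    refine Submodule.add_mem _ ?_ (Submodule.add_mem _ ?_ ?_)
    · refine adjoin_mul_I h ?_ (IH s c)
      exact Subalgebra.add_mem _
        (Algebra.subset_adjoin (Ue_mem_pSet h p s i c (le_of_lt hci)))
        (Subalgebra.smul_mem _ (Algebra.subset_adjoin (Uf_mem_pSet h p s i c (le_of_lt hci))) _)
    · exact Submodule.mem_sup_right
        (nGen_mul_diagSpan h (Ue_mem_nSet h p s i c hci) (DD_mem_diagSpan h ε m s c q))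
    · exact Submodule.smul_mem _ _ (Submodule.mem_sup_right
        (nGen_mul_diagSpan h (Uf_mem_nSet h p s i c hci) (DD_mem_diagSpan h ε m s c q)))

lemma Rsum (h : l ∣ n) (ε : ℂ) (m : ℕ) (p : Fin (n/l)) (i : Fin l) (q : Fin (n/l)) :
    ∑ s, ∑ c, Rfun h ε m p i q s c = DD h ε (m+1) p i q := by
  have hsplit : ∀ s : Fin (n/l), ∑ c, Rfun h ε m p i q s c
      = (∑ c, (if i.val = c.val + 1 ∧ p = s then (1:ℂ) else 0) • DD h ε m s c q)
        + (Ue (bidx h p i) (bidx h s i) + (ε * (-1:ℂ)^m) • Uf (bidx h p i) (bidx h s i)) *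
            DD h ε m s i q := by
    intro s
    simp only [Rfun]
    rw [Finset.sum_add_distrib]
    congr 1
    rw [Finset.sum_ite_eq' univ i]
    simp
  rw [Finset.sum_congr rfl (fun s _ => hsplit s), Finset.sum_add_distrib]
  show _ = (if _hi : 0 < i.val then
        DD h ε m p ⟨i.val - 1, Nat.lt_of_le_of_lt (Nat.sub_le _ _) i.isLt⟩ q else 0) + _
  congr 1
  by_cases hi : 0 < i.val
  · rw [dif_pos hi, Finset.sum_eq_single p]
    · rw [Finset.sum_eq_single (⟨i.val - 1, Nat.lt_of_le_of_lt (Nat.sub_le _ _) i.isLt⟩ : Fin l)]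
      · have hcond : i.val = (⟨i.val - 1, Nat.lt_of_le_of_lt (Nat.sub_le _ _) i.isLt⟩ : Fin l).val + 1 := by
          show i.val = i.val - 1 + 1
          omega
        rw [if_pos ⟨hcond, rfl⟩, one_smul]
      · intro c _ hc
        rw [if_neg, zero_smul]
        rintro ⟨h1, -⟩
        exact hc (Fin.ext (show c.val = i.val - 1 by omega))
      · intro habs; exact absurd (Finset.mem_univ _) habs
    · intro s _ hs
      refine Finset.sum_eq_zero (fun c _ => ?_)
      rw [if_neg, zero_smul]
      rintro ⟨-, h2⟩
      exact hs h2.symm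
    · intro habs; exact absurd (Finset.mem_univ _) habs
  · rw [dif_neg hi]
    refine Finset.sum_eq_zero (fun s _ => Finset.sum_eq_zero (fun c _ => ?_))
    rw [if_neg, zero_smul]
    rintro ⟨h1, -⟩
    omega

lemma main_cong (h : l ∣ n) (hl : 0 < l) (ε : ℂ) (hε : ε * ε = 1) (q : Fin (n/l)) :
    ∀ (m : ℕ) (p : Fin (n/l)) (i : Fin l),
      gMQ ε m (bidx h p i) (bidx h q ⟨0, hl⟩) - DD h ε m p i q
        ∈ (Ichi n l h).restrictScalars ℂ ⊔ Lspan n l h := by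
  intro m
  induction m with
  | zero =>
      intro p i
      have heq : gMQ ε 0 (bidx h p i) (bidx h q ⟨0, hl⟩) = DD h ε 0 p i q := by
        rw [gMQ_zero]
        show _ = if i.val = 0 ∧ p = q then (1 : UQ n) else 0
        by_cases hc : i.val = 0 ∧ p = q
        · have hb : bidx h p i = bidx h q ⟨0, hl⟩ := by
            rw [bidx_inj]; exact ⟨hc.2, Fin.ext hc.1⟩
          rw [if_pos hc, kd, if_pos hb, map_one]
        · have hb : bidx h p i ≠ bidx h q ⟨0, hl⟩ := by
            intro he; obtain ⟨h1, h2⟩ := (bidx_inj h).1 he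
            exact hc ⟨by simpa using congrArg Fin.val h2, h1⟩
          rw [if_neg hc, kd, if_neg hb, map_zero]
      rw [heq, sub_self]; exact Submodule.zero_mem _
  | succ m ih =>
      intro p i
      have hsum : gMQ ε (m+1) (bidx h p i) (bidx h q ⟨0, hl⟩)
          = ∑ s, ∑ c, (Ue (bidx h p i) (bidx h s c) +
              (ε * (-1:ℂ)^m) • Uf (bidx h p i) (bidx h s c)) *
              gMQ ε m (bidx h s c) (bidx h q ⟨0, hl⟩) := by
        rw [gMQ_succ ε hε m, sum_bidx h hl]
      have hconv : gMQ ε (m+1) (bidx h p i) (bidx h q ⟨0, hl⟩) - DD h ε (m+1) p i q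
          = ∑ s, ∑ c, ((Ue (bidx h p i) (bidx h s c) +
              (ε * (-1:ℂ)^m) • Uf (bidx h p i) (bidx h s c)) *
              gMQ ε m (bidx h s c) (bidx h q ⟨0, hl⟩) - Rfun h ε m p i q s c) := by
        rw [hsum, ← Rsum h ε m p i q]
        simp only [← Finset.sum_sub_distrib]
      rw [hconv]
      exact Submodule.sum_mem _ (fun s _ => Submodule.sum_mem _
        (fun c _ => key_term h hl ε hε q m p i (fun s c => ih s c) s c))

end Main
section Chain

open Finset

variable {n l : ℕ}

def chainCond {n l : ℕ} (p q : Fin (n/l)) (r ib : ℕ)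
    (c : Fin (r+1) → Fin (n/l)) (iv : Fin r → Fin l) : Prop :=
  c 0 = p ∧ c (Fin.last r) = q ∧ (∀ a b : Fin r, a ≤ b → iv b ≤ iv a) ∧
    ∀ a : Fin r, (iv a).val ≤ ib

def chainFac (h : l ∣ n) (ε : ℂ) (r : ℕ)
    (c : Fin (r+1) → Fin (n/l)) (iv : Fin r → Fin l) (a : Fin r) : UQ n :=
  Ue (bidx h (c a.castSucc) (iv a)) (bidx h (c a.succ) (iv a)) +
    (ε * (-1:ℂ)^(r - 1 - a.val + (iv a).val)) •
      Uf (bidx h (c a.castSucc) (iv a)) (bidx h (c a.succ) (iv a))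

def CU (h : l ∣ n) (ε : ℂ) (r ib : ℕ) (p q : Fin (n/l)) : UQ n :=
  ∑ c : Fin (r+1) → Fin (n/l), ∑ iv : Fin r → Fin l,
    (if chainCond p q r ib c iv then (1:ℂ) else 0) • (List.ofFn (chainFac h ε r c iv)).prod

lemma CU_zero (h : l ∣ n) (ε : ℂ) (ib : ℕ) (p q : Fin (n/l)) :
    CU h ε 0 ib p q = if p = q then 1 else 0 := by
  unfold CU
  have h1 : ∀ c : Fin 1 → Fin (n/l), ∑ iv : Fin 0 → Fin l,
      (if chainCond p q 0 ib c iv then (1:ℂ) else 0) • (List.ofFn (chainFac h ε 0 c iv)).prod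
      = (if c 0 = p ∧ c 0 = q then (1:ℂ) else 0) • 1 := by
    intro c
    rw [Fintype.sum_unique]
    have hprod : (List.ofFn (chainFac h ε 0 c (default : Fin 0 → Fin l))).prod = 1 := by
      simp
    have hiff : chainCond p q 0 ib c (default : Fin 0 → Fin l) ↔ (c 0 = p ∧ c 0 = q) := by
      unfold chainCond
      constructor
      · rintro ⟨ha, hb, -, -⟩; exact ⟨ha, hb⟩
      · rintro ⟨ha, hb⟩; exact ⟨ha, hb, fun a => a.elim0, fun a => a.elim0⟩
    rw [hprod, if_congr hiff rfl rfl]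
  rw [Finset.sum_congr rfl (fun c _ => h1 c)]
  rw [← (Fintype.sum_equiv (Equiv.funUnique (Fin 1) (Fin (n/l))).symm
      (fun x : Fin (n/l) => (if x = p ∧ x = q then (1:ℂ) else 0) • (1 : UQ n))
      (fun c : Fin 1 → Fin (n/l) => (if c 0 = p ∧ c 0 = q then (1:ℂ) else 0) • (1 : UQ n))
      (fun x => rfl))]
  by_cases hpq : p = q
  · subst hpq
    rw [Finset.sum_eq_single p]
    · simp
    · intro x _ hx; simp [hx]
    · intro hx; exact absurd (Finset.mem_univ _) hx
  · rw [if_neg hpq]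
    refine Finset.sum_eq_zero (fun x _ => ?_)
    by_cases hx : x = p
    · subst hx; simp [fun hq => hpq hq]
    · simp [hx]

lemma chainCond_cons_iff (p q : Fin (n/l)) (r ib : ℕ) (c0 : Fin (n/l))
    (c' : Fin (r+1) → Fin (n/l)) (i0 : Fin l) (iv' : Fin r → Fin l) :
    chainCond p q (r+1) ib (Fin.cons c0 c') (Fin.cons i0 iv') ↔
      (c0 = p ∧ c' (Fin.last r) = q ∧ (∀ a b : Fin r, a ≤ b → iv' b ≤ iv' a) ∧
        (∀ a : Fin r, iv' a ≤ i0) ∧ i0.val ≤ ib ∧ (∀ a : Fin r, (iv' a).val ≤ ib)) := by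
  unfold chainCond
  constructor
  · rintro ⟨h1, h2, h3, h4⟩
    refine ⟨h1, ?_, ?_, ?_, ?_, ?_⟩
    · rwa [← Fin.succ_last, Fin.cons_succ] at h2
    · intro a b hab
      have := h3 a.succ b.succ (Fin.succ_le_succ_iff.2 hab)
      simpa [Fin.cons_succ] using this
    · intro a
      have := h3 0 a.succ (by simp [Fin.le_def])
      simpa [Fin.cons_succ, Fin.cons_zero] using this
    · simpa [Fin.cons_zero] using h4 0
    · intro a
      simpa [Fin.cons_succ] using h4 a.succ
  · rintro ⟨h1, h2, h3, h4, h5, h6⟩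
    refine ⟨h1, ?_, ?_, ?_⟩
    · rwa [← Fin.succ_last, Fin.cons_succ]
    · intro a b hab
      induction b using Fin.cases with
      | zero =>
          have : a = 0 := le_antisymm (by simpa using hab) (by simp [Fin.le_def])
          subst this
          exact le_rfl
      | succ b =>
          induction a using Fin.cases with
          | zero => simpa [Fin.cons_zero, Fin.cons_succ] using h4 b
          | succ a =>
              have hab' : a ≤ b := by
                have := hab
                simp only [Fin.succ_le_succ_iff] at this
                exact this
              simpa [Fin.cons_succ] using h3 a b hab'
    · intro a
      induction a using Fin.cases with
      | zero => simpa [Fin.cons_zero] using h5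
      | succ a => simpa [Fin.cons_succ] using h6 a

lemma chainFac_cons_prod (h : l ∣ n) (ε : ℂ) (r : ℕ) (c0 : Fin (n/l))
    (c' : Fin (r+1) → Fin (n/l)) (i0 : Fin l) (iv' : Fin r → Fin l) :
    (List.ofFn (chainFac h ε (r+1) (Fin.cons c0 c') (Fin.cons i0 iv'))).prod
      = (Ue (bidx h c0 i0) (bidx h (c' 0) i0) +
          (ε * (-1:ℂ)^(r + i0.val)) • Uf (bidx h c0 i0) (bidx h (c' 0) i0)) *
        (List.ofFn (chainFac h ε r c' iv')).prod := by
  have htail : (fun a : Fin r => chainFac h ε (r+1) (Fin.cons c0 c') (Fin.cons i0 iv') a.succ)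
      = chainFac h ε r c' iv' := by
    funext a
    unfold chainFac
    rw [← Fin.succ_castSucc]
    simp only [Fin.cons_succ, Fin.val_succ]
    rw [show r + 1 - 1 - (a.val + 1) = r - 1 - a.val by omega]
  have hhead : chainFac h ε (r+1) (Fin.cons c0 c') (Fin.cons i0 iv') 0
      = Ue (bidx h c0 i0) (bidx h (c' 0) i0) +
          (ε * (-1:ℂ)^(r + i0.val)) • Uf (bidx h c0 i0) (bidx h (c' 0) i0) := by
    unfold chainFac
    simp only [Fin.castSucc_zero, Fin.cons_zero, Fin.cons_succ, Fin.val_zero]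
    rw [show r + 1 - 1 - 0 = r by omega]
  rw [List.ofFn_succ, List.prod_cons, htail, hhead]

end Chain
section ChainRec

open Finset

variable {n l : ℕ}

lemma CU_cons (h : l ∣ n) (ε : ℂ) (r ib : ℕ) (p q : Fin (n/l)) :
    CU h ε (r+1) ib p q
      = ∑ c0 : Fin (n/l), ∑ c' : Fin (r+1) → Fin (n/l), ∑ i0 : Fin l, ∑ iv' : Fin r → Fin l,
          (if chainCond p q (r+1) ib (Fin.cons c0 c') (Fin.cons i0 iv') then (1:ℂ) else 0) •
          ((Ue (bidx h c0 i0) (bidx h (c' 0) i0) +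
              (ε * (-1:ℂ)^(r + i0.val)) • Uf (bidx h c0 i0) (bidx h (c' 0) i0)) *
            (List.ofFn (chainFac h ε r c' iv')).prod) := by
  unfold CU
  rw [← (Fintype.sum_equiv (Fin.consEquiv (fun _ : Fin (r+2) => Fin (n/l)))
    (fun x : Fin (n/l) × (Fin (r+1) → Fin (n/l)) =>
      ∑ iv : Fin (r+1) → Fin l,
        (if chainCond p q (r+1) ib (Fin.cons x.1 x.2) iv then (1:ℂ) else 0) •
          (List.ofFn (chainFac h ε (r+1) (Fin.cons x.1 x.2) iv)).prod)
    _ (fun x => rfl)), Fintype.sum_prod_type]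
  refine Finset.sum_congr rfl (fun c0 _ => Finset.sum_congr rfl (fun c' _ => ?_))
  rw [← (Fintype.sum_equiv (Fin.consEquiv (fun _ : Fin (r+1) => Fin l))
    (fun x : Fin l × (Fin r → Fin l) =>
      (if chainCond p q (r+1) ib (Fin.cons c0 c') (Fin.cons x.1 x.2) then (1:ℂ) else 0) •
        (List.ofFn (chainFac h ε (r+1) (Fin.cons c0 c') (Fin.cons x.1 x.2))).prod)
    _ (fun x => rfl)), Fintype.sum_prod_type]
  refine Finset.sum_congr rfl (fun i0 _ => Finset.sum_congr rfl (fun iv' _ => ?_))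
  rw [chainFac_cons_prod]

lemma quadC_eq (h : l ∣ n) (ε : ℂ) (r ib : ℕ) (hibl : ib < l) (p q : Fin (n/l)) :
    ∑ c0 : Fin (n/l), ∑ c' : Fin (r+1) → Fin (n/l), ∑ i0 : Fin l, ∑ iv' : Fin r → Fin l,
        (if c0 = p ∧ i0 = ⟨ib, hibl⟩ ∧ chainCond (c' 0) q r ib c' iv' then (1:ℂ) else 0) •
          ((Ue (bidx h c0 i0) (bidx h (c' 0) i0) +
              (ε * (-1:ℂ)^(r + i0.val)) • Uf (bidx h c0 i0) (bidx h (c' 0) i0)) *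
            (List.ofFn (chainFac h ε r c' iv')).prod)
      = ∑ s, (Ue (bidx h p ⟨ib, hibl⟩) (bidx h s ⟨ib, hibl⟩) +
            (ε * (-1:ℂ)^(r + ib)) • Uf (bidx h p ⟨ib, hibl⟩) (bidx h s ⟨ib, hibl⟩)) *
            CU h ε r ib s q := by
  -- collapse the c0 sum
  rw [Finset.sum_eq_single p]
  rotate_left
  · intro c0 _ hc0
    refine Finset.sum_eq_zero (fun c' _ => Finset.sum_eq_zero (fun i0 _ =>
      Finset.sum_eq_zero (fun iv' _ => ?_)))
    rw [if_neg (fun hc => hc0 hc.1), zero_smul]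
  · intro habs; exact absurd (Finset.mem_univ _) habs
  -- collapse the i0 sum
  have h2 : ∀ c' : Fin (r+1) → Fin (n/l),
      (∑ i0 : Fin l, ∑ iv' : Fin r → Fin l,
        (if p = p ∧ i0 = ⟨ib, hibl⟩ ∧ chainCond (c' 0) q r ib c' iv' then (1:ℂ) else 0) •
          ((Ue (bidx h p i0) (bidx h (c' 0) i0) +
              (ε * (-1:ℂ)^(r + i0.val)) • Uf (bidx h p i0) (bidx h (c' 0) i0)) *
            (List.ofFn (chainFac h ε r c' iv')).prod))
      = ∑ iv' : Fin r → Fin l,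
          (if chainCond (c' 0) q r ib c' iv' then (1:ℂ) else 0) •
          ((Ue (bidx h p ⟨ib, hibl⟩) (bidx h (c' 0) ⟨ib, hibl⟩) +
              (ε * (-1:ℂ)^(r + ib)) • Uf (bidx h p ⟨ib, hibl⟩) (bidx h (c' 0) ⟨ib, hibl⟩)) *
            (List.ofFn (chainFac h ε r c' iv')).prod) := by
    intro c'
    rw [Finset.sum_eq_single (⟨ib, hibl⟩ : Fin l)]
    · refine Finset.sum_congr rfl (fun iv' _ => ?_)
      congr 1
      rw [if_congr (show (p = p ∧ (⟨ib, hibl⟩ : Fin l) = ⟨ib, hibl⟩ ∧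
        chainCond (c' 0) q r ib c' iv') ↔ chainCond (c' 0) q r ib c' iv' by simp) rfl rfl]
    · intro i0 _ hi0
      refine Finset.sum_eq_zero (fun iv' _ => ?_)
      rw [if_neg (fun hc => hi0 hc.2.1), zero_smul]
    · intro habs; exact absurd (Finset.mem_univ _) habs
  rw [Finset.sum_congr rfl (fun c0 _ => h2 c0)]
  -- now identify with the RHS
  unfold CU
  simp only [Finset.mul_sum, mul_smul_comm]
  conv_rhs => rw [Finset.sum_comm]
  refine Finset.sum_congr rfl (fun c' _ => ?_)
  conv_rhs => rw [Finset.sum_comm]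
  refine Finset.sum_congr rfl (fun iv' _ => ?_)
  rw [Finset.sum_eq_single (c' 0)
    (fun s _ hs => by rw [if_neg (fun hc => hs hc.1.symm), zero_smul])
    (fun habs => absurd (Finset.mem_univ _) habs)]

end ChainRec
section ChainRec2

open Finset

variable {n l : ℕ}

lemma CU_rec (h : l ∣ n) (ε : ℂ) (r ib : ℕ) (hibl : ib < l) (p q : Fin (n/l)) :
    CU h ε (r+1) ib p q
      = (if 0 < ib then CU h ε (r+1) (ib-1) p q else 0)
        + ∑ s, (Ue (bidx h p ⟨ib, hibl⟩) (bidx h s ⟨ib, hibl⟩) +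
            (ε * (-1:ℂ)^(r + ib)) • Uf (bidx h p ⟨ib, hibl⟩) (bidx h s ⟨ib, hibl⟩)) *
            CU h ε r ib s q := by
  by_cases hib : 0 < ib
  · rw [if_pos hib, CU_cons h ε r ib p q, CU_cons h ε r (ib-1) p q,
      ← quadC_eq h ε r ib hibl p q, ← Finset.sum_add_distrib]
    refine Finset.sum_congr rfl (fun c0 _ => ?_)
    rw [← Finset.sum_add_distrib]
    refine Finset.sum_congr rfl (fun c' _ => ?_)
    rw [← Finset.sum_add_distrib]
    refine Finset.sum_congr rfl (fun i0 _ => ?_)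
    rw [← Finset.sum_add_distrib]
    refine Finset.sum_congr rfl (fun iv' _ => ?_)
    rw [← add_smul]
    congr 1
    rw [chainCond_cons_iff, chainCond_cons_iff]
    by_cases hB : (c0 = p ∧ c' (Fin.last r) = q ∧ (∀ a b : Fin r, a ≤ b → iv' b ≤ iv' a) ∧
        (∀ a : Fin r, iv' a ≤ i0) ∧ i0.val ≤ ib - 1 ∧ (∀ a : Fin r, (iv' a).val ≤ ib - 1))
    · have hC : ¬(c0 = p ∧ i0 = ⟨ib, hibl⟩ ∧ chainCond (c' 0) q r ib c' iv') := by
        rintro ⟨-, hi0, -⟩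
        have : i0.val = ib := by rw [hi0]
        have := hB.2.2.2.2.1
        omega
      have hA : (c0 = p ∧ c' (Fin.last r) = q ∧ (∀ a b : Fin r, a ≤ b → iv' b ≤ iv' a) ∧
          (∀ a : Fin r, iv' a ≤ i0) ∧ i0.val ≤ ib ∧ (∀ a : Fin r, (iv' a).val ≤ ib)) := by
        obtain ⟨h1, h2, h3, h4, h5, h6⟩ := hB
        exact ⟨h1, h2, h3, h4, by omega, fun a => by have := h6 a; omega⟩
      rw [if_pos hA, if_pos hB, if_neg hC, add_zero]
    · by_cases hC : (c0 = p ∧ i0 = ⟨ib, hibl⟩ ∧ chainCond (c' 0) q r ib c' iv')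
      · have hA : (c0 = p ∧ c' (Fin.last r) = q ∧ (∀ a b : Fin r, a ≤ b → iv' b ≤ iv' a) ∧
            (∀ a : Fin r, iv' a ≤ i0) ∧ i0.val ≤ ib ∧ (∀ a : Fin r, (iv' a).val ≤ ib)) := by
          obtain ⟨h1, hi0, -, h2, h3, h4⟩ := hC
          have hiv : i0.val = ib := by rw [hi0]
          refine ⟨h1, h2, h3, fun a => ?_, by omega, h4⟩
          rw [Fin.le_def, hiv]
          exact h4 a
        rw [if_pos hA, if_neg hB, if_pos hC, zero_add]
      · have hA : ¬(c0 = p ∧ c' (Fin.last r) = q ∧ (∀ a b : Fin r, a ≤ b → iv' b ≤ iv' a) ∧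
            (∀ a : Fin r, iv' a ≤ i0) ∧ i0.val ≤ ib ∧ (∀ a : Fin r, (iv' a).val ≤ ib)) := by
          rintro ⟨h1, h2, h3, h4, h5, h6⟩
          by_cases hi0 : i0.val = ib
          · exact hC ⟨h1, Fin.ext hi0, rfl, h2, h3, h6⟩
          · refine hB ⟨h1, h2, h3, h4, by omega, fun a => ?_⟩
            have := (Fin.le_def).1 (h4 a)
            omega
        rw [if_neg hA, if_neg hB, if_neg hC, add_zero]
  · have hib0 : ib = 0 := by omega
    rw [if_neg hib, zero_add, CU_cons h ε r ib p q, ← quadC_eq h ε r ib hibl p q]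
    refine Finset.sum_congr rfl (fun c0 _ => Finset.sum_congr rfl (fun c' _ =>
      Finset.sum_congr rfl (fun i0 _ => Finset.sum_congr rfl (fun iv' _ => ?_))))
    congr 1
    rw [chainCond_cons_iff]
    have hiff : (c0 = p ∧ c' (Fin.last r) = q ∧ (∀ a b : Fin r, a ≤ b → iv' b ≤ iv' a) ∧
          (∀ a : Fin r, iv' a ≤ i0) ∧ i0.val ≤ ib ∧ (∀ a : Fin r, (iv' a).val ≤ ib))
        ↔ (c0 = p ∧ i0 = ⟨ib, hibl⟩ ∧ chainCond (c' 0) q r ib c' iv') := by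
      constructor
      · rintro ⟨h1, h2, h3, h4, h5, h6⟩
        exact ⟨h1, Fin.ext (show i0.val = ib by omega), rfl, h2, h3, h6⟩
      · rintro ⟨h1, hi0, -, h2, h3, h4⟩
        have hiv : i0.val = ib := by rw [hi0]
        refine ⟨h1, h2, h3, fun a => ?_, by omega, h4⟩
        rw [Fin.le_def, hiv]
        exact h4 a
    simp only [hiff]

lemma DD_eq_CU (h : l ∣ n) (ε : ℂ) :
    ∀ (m : ℕ) (p : Fin (n/l)) (i : Fin l) (q : Fin (n/l)),
      DD h ε m p i q = if i.val ≤ m then CU h ε (m - i.val) i.val p q else 0 := by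
  intro m
  induction m with
  | zero =>
      intro p i q
      show (if i.val = 0 ∧ p = q then (1 : UQ n) else 0) = _
      by_cases hi : i.val = 0
      · rw [if_pos (show i.val ≤ 0 by omega), Nat.zero_sub, CU_zero]
        by_cases hpq : p = q
        · rw [if_pos ⟨hi, hpq⟩, if_pos hpq]
        · rw [if_neg (fun hc => hpq hc.2), if_neg hpq]
      · rw [if_neg (fun hc => hi hc.1), if_neg (show ¬(i.val ≤ 0) by omega)]
  | succ m ih =>
      intro p i q
      show (if _hi : 0 < i.val then
          DD h ε m p ⟨i.val - 1, Nat.lt_of_le_of_lt (Nat.sub_le _ _) i.isLt⟩ q else 0) +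
        (∑ s, (Ue (bidx h p i) (bidx h s i) + (ε * (-1:ℂ)^m) • Uf (bidx h p i) (bidx h s i)) *
          DD h ε m s i q) = _
      by_cases him : i.val ≤ m
      · rw [if_pos (by omega)]
        have hr : m + 1 - i.val = (m - i.val) + 1 := by omega
        rw [hr, CU_rec h ε (m - i.val) i.val i.isLt p q]
        congr 1
        · -- the χ-term
          by_cases hi : 0 < i.val
          · rw [dif_pos hi, if_pos hi, ih]
            rw [if_pos (by simp; omega)]
            have h1 : m - (⟨i.val - 1, Nat.lt_of_le_of_lt (Nat.sub_le _ _) i.isLt⟩ : Fin l).val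
                = m - i.val + 1 := by simp; omega
            rw [h1]
          · rw [dif_neg hi, if_neg hi]
        · -- the diagonal term
          refine Finset.sum_congr rfl (fun s _ => ?_)
          rw [ih, if_pos him]
          have h2 : (⟨i.val, i.isLt⟩ : Fin l) = i := rfl
          rw [h2]
          have h3 : m - i.val + i.val = m := by omega
          rw [h3]
      · by_cases him1 : i.val = m + 1
        · rw [if_pos (by omega)]
          have hr : m + 1 - i.val = 0 := by omega
          rw [hr, CU_zero]
          have hpos : 0 < i.val := by omega
          rw [dif_pos hpos, ih]
          rw [if_pos (by simp; omega)]
          have h1 : m - (⟨i.val - 1, Nat.lt_of_le_of_lt (Nat.sub_le _ _) i.isLt⟩ : Fin l).val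
              = 0 := by simp; omega
          rw [h1, CU_zero]
          have hz : ∀ s : Fin (n/l),
              (Ue (bidx h p i) (bidx h s i) + (ε * (-1:ℂ)^m) • Uf (bidx h p i) (bidx h s i)) *
                DD h ε m s i q = 0 := by
            intro s
            rw [ih, if_neg (by omega), mul_zero]
          rw [Finset.sum_congr rfl (fun s _ => hz s), Finset.sum_const_zero, add_zero]
        · rw [if_neg (by omega)]
          have hz : ∀ s : Fin (n/l),
              (Ue (bidx h p i) (bidx h s i) + (ε * (-1:ℂ)^m) • Uf (bidx h p i) (bidx h s i)) *
                DD h ε m s i q = 0 := by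
            intro s
            rw [ih, if_neg (by omega), mul_zero]
          rw [Finset.sum_congr rfl (fun s _ => hz s), Finset.sum_const_zero, add_zero]
          have hpos : 0 < i.val := by omega
          rw [dif_pos hpos, ih, if_neg (by simp; omega)]

end ChainRec2
section Final

open Finset

variable {n l : ℕ}

lemma psi_chain (h : l ∣ n) (hl : 0 < l) (ε : ℂ) (ψ : TQ (n/l) l →ₐ[ℂ] UQ n)
    (hx : ∀ (i : Fin l) (a b : Fin (n/l)), ψ (xT i a b) = Ue (bidx h a i) (bidx h b i))
    (hxi : ∀ (i : Fin l) (a b : Fin (n/l)),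
      ψ (xiT i a b) = (ε * (-1:ℂ)^(i.val)) • Uf (bidx h a i) (bidx h b i))
    (k : ℕ) (p q : Fin (n/l)) :
    ψ (chainProdDec (n/l) l k p q) = CU h ε k (l-1) p q := by
  unfold chainProdDec CU
  rw [map_sum]
  refine Finset.sum_congr rfl (fun c _ => ?_)
  rw [map_sum]
  refine Finset.sum_congr rfl (fun iv _ => ?_)
  rw [map_smul]
  congr 1
  · -- indicators
    have hiff : (c 0 = p ∧ c (Fin.last k) = q ∧ (∀ a b : Fin k, a ≤ b → iv b ≤ iv a))
        ↔ chainCond p q k (l-1) c iv := by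
      unfold chainCond
      constructor
      · rintro ⟨h1, h2, h3⟩
        exact ⟨h1, h2, h3, fun a => by have := (iv a).isLt; omega⟩
      · rintro ⟨h1, h2, h3, -⟩
        exact ⟨h1, h2, h3⟩
    by_cases hc : (c 0 = p ∧ c (Fin.last k) = q ∧ (∀ a b : Fin k, a ≤ b → iv b ≤ iv a))
    · rw [if_pos hc, if_pos (hiff.1 hc)]
    · rw [if_neg hc, if_neg (fun hcc => hc (hiff.2 hcc))]
  · rw [map_list_prod, List.map_ofFn]
    refine congrArg List.prod (congrArg List.ofFn (funext fun a => ?_))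
    show ψ (xT (iv a) (c a.castSucc) (c a.succ) +
        ((-1:ℂ) ^ (k - 1 - a.val)) • xiT (iv a) (c a.castSucc) (c a.succ))
      = chainFac h ε k c iv a
    rw [map_add, map_smul, hx, hxi]
    unfold chainFac
    congr 1
    rw [smul_smul]
    congr 1
    rw [pow_add]
    ring

lemma eU_as_gMQ (m : ℕ) (x y : Fin n) :
    eU m x y = (2⁻¹:ℂ) • (gMQ 1 m x y + gMQ (-1) m x y) := by
  unfold gMQ
  match_scalars <;> norm_num

lemma fU_as_gMQ (m : ℕ) (x y : Fin n) :
    fU m x y = (2⁻¹:ℂ) • (gMQ 1 m x y - gMQ (-1) m x y) := by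
  unfold gMQ
  match_scalars <;> norm_num

end Final
/-- Let `l ∣ n`, `1 ≤ p,q ≤ n/l`, `1 ≤ k ≤ l`.  Then in
`U(g₀) ≅ U(Q(n/l))^{⊗l}`, `ϑ(π(e^{(l+k-1)}_{lp, l(q-1)+1}))` equals the even component,
and `ϑ(π(f^{(l+k-1)}_{lp, l(q-1)+1}))` the odd component, of
`Σ_{p_1,…,p_{k-1}} Σ_{l ≥ i_1 ≥ … ≥ i_k ≥ 1} Π_{a=1}^k
 (x^{i_a}_{p_{a-1},p_a} + (-1)^{k-a} ξ^{i_a}_{p_{a-1},p_a})` (`p_0 = p`, `p_k = q`).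
The Harish-Chandra projection is expressed via the PBW decomposition
`U(Q(n)) = (U(g₀) ⊕ U(p)n) ⊕ I_χ`:  `ϑ(π(y)) = t` iff `y - ι₀(t) ∈ I_χ + U(p)n`, where
`ι₀ : U(Q(n/l))^{⊗l} ≅ U(g₀) ⊆ U(Q(n))` is the canonical embedding and the even/odd
components are taken w.r.t. the parity involution `σT` of `U(Q(n/l))^{⊗l}`. -/
theorem statement9 (n l : ℕ) (hl : 0 < l) (h : l ∣ n) (p q : Fin (n / l))
    (k : ℕ) (hk1 : 1 ≤ k) (hk2 : k ≤ l)
    (σT : TQ (n / l) l →ₐ[ℂ] TQ (n / l) l)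
    (hσTx : ∀ (i : Fin l) (a b : Fin (n / l)), σT (xT i a b) = xT i a b)
    (hσTxi : ∀ (i : Fin l) (a b : Fin (n / l)), σT (xiT i a b) = -xiT i a b)
    (ι₀ : TQ (n / l) l →ₐ[ℂ] UQ n)
    (hι₀x : ∀ (i : Fin l) (a b : Fin (n / l)),
      ι₀ (xT i a b) = Ue (bidx h a i) (bidx h b i))
    (hι₀xi : ∀ (i : Fin l) (a b : Fin (n / l)),
      ι₀ (xiT i a b) = ((-1 : ℂ) ^ i.val) • Uf (bidx h a i) (bidx h b i)) :
    (eU (l + k - 1) (bidx h p ⟨l - 1, by omega⟩) (bidx h q ⟨0, hl⟩) -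
        ι₀ ((2⁻¹ : ℂ) • (chainProdDec (n / l) l k p q + σT (chainProdDec (n / l) l k p q)))
      ∈ (Ichi n l h).restrictScalars ℂ ⊔ Lspan n l h) ∧
    (fU (l + k - 1) (bidx h p ⟨l - 1, by omega⟩) (bidx h q ⟨0, hl⟩) -
        ι₀ ((2⁻¹ : ℂ) • (chainProdDec (n / l) l k p q - σT (chainProdDec (n / l) l k p q)))
      ∈ (Ichi n l h).restrictScalars ℂ ⊔ Lspan n l h) := by
  have h1 := main_cong h hl 1 (by norm_num) q (l + k - 1) p ⟨l - 1, by omega⟩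
  have h2 := main_cong h hl (-1) (by norm_num) q (l + k - 1) p ⟨l - 1, by omega⟩
  have hD1 : DD h 1 (l + k - 1) p ⟨l - 1, by omega⟩ q = CU h 1 k (l-1) p q := by
    rw [DD_eq_CU h 1 (l + k - 1) p ⟨l - 1, by omega⟩ q,
      if_pos (show (⟨l - 1, by omega⟩ : Fin l).val ≤ l + k - 1 by
        show l - 1 ≤ l + k - 1; omega)]
    have hv : l + k - 1 - (⟨l - 1, by omega⟩ : Fin l).val = k := by
      show l + k - 1 - (l - 1) = k; omega
    rw [hv]
  have hD2 : DD h (-1) (l + k - 1) p ⟨l - 1, by omega⟩ q = CU h (-1) k (l-1) p q := by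
    rw [DD_eq_CU h (-1) (l + k - 1) p ⟨l - 1, by omega⟩ q,
      if_pos (show (⟨l - 1, by omega⟩ : Fin l).val ≤ l + k - 1 by
        show l - 1 ≤ l + k - 1; omega)]
    have hv : l + k - 1 - (⟨l - 1, by omega⟩ : Fin l).val = k := by
      show l + k - 1 - (l - 1) = k; omega
    rw [hv]
  have hS1 : ι₀ (chainProdDec (n/l) l k p q) = CU h 1 k (l-1) p q := by
    refine psi_chain h hl 1 ι₀ hι₀x (fun i a b => ?_) k p q
    rw [hι₀xi, one_mul]
  have hS2 : ι₀ (σT (chainProdDec (n/l) l k p q)) = CU h (-1) k (l-1) p q := by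
    have hres := psi_chain h hl (-1) (ι₀.comp σT)
      (fun i a b => by rw [AlgHom.comp_apply, hσTx, hι₀x])
      (fun i a b => by
        rw [AlgHom.comp_apply, hσTxi, map_neg, hι₀xi]
        module) k p q
    simpa [AlgHom.comp_apply] using hres
  constructor
  · have heq : eU (l + k - 1) (bidx h p ⟨l - 1, by omega⟩) (bidx h q ⟨0, hl⟩) -
        ι₀ ((2⁻¹ : ℂ) • (chainProdDec (n / l) l k p q + σT (chainProdDec (n / l) l k p q)))
        = (2⁻¹:ℂ) • ((gMQ 1 (l + k - 1) (bidx h p ⟨l - 1, by omega⟩) (bidx h q ⟨0, hl⟩)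
              - DD h 1 (l + k - 1) p ⟨l - 1, by omega⟩ q)
            + (gMQ (-1) (l + k - 1) (bidx h p ⟨l - 1, by omega⟩) (bidx h q ⟨0, hl⟩)
              - DD h (-1) (l + k - 1) p ⟨l - 1, by omega⟩ q)) := by
      rw [map_smul, map_add, hS1, hS2, ← hD1, ← hD2, eU_as_gMQ]
      module
    rw [heq]
    exact Submodule.smul_mem _ _ (Submodule.add_mem _ h1 h2)
  · have heq : fU (l + k - 1) (bidx h p ⟨l - 1, by omega⟩) (bidx h q ⟨0, hl⟩) -
        ι₀ ((2⁻¹ : ℂ) • (chainProdDec (n / l) l k p q - σT (chainProdDec (n / l) l k p q)))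
        = (2⁻¹:ℂ) • ((gMQ 1 (l + k - 1) (bidx h p ⟨l - 1, by omega⟩) (bidx h q ⟨0, hl⟩)
              - DD h 1 (l + k - 1) p ⟨l - 1, by omega⟩ q)
            - (gMQ (-1) (l + k - 1) (bidx h p ⟨l - 1, by omega⟩) (bidx h q ⟨0, hl⟩)
              - DD h (-1) (l + k - 1) p ⟨l - 1, by omega⟩ q)) := by
      rw [map_smul, map_sub, hS1, hS2, ← hD1, ← hD2, fU_as_gMQ]
      module
    rw [heq]
    exact Submodule.smul_mem _ _ (Submodule.sub_mem _ h1 h2)
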